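/- arXiv:1303.0370 — 3 statements merged into one kernel-verified Lean document; each statement's English description precedes it below -/
import Mathlib

section
/- Let E ⊆ ℝ^d be a dust-like self-similar set, the attractor of similarities φ₁, …, φ_m with ratios ρ₁, …, ρ_m, and let F ⊆ ℝ^d be a dust-like self-similar set, the attractor of similarities ψ₁, …, ψ_n with ratios τ₁, …, τ_n. Let f : E → F be a bi-Lipschitz bijection. Then there exists n₀ ∈ ℕ such that for every finite word i over {1, …, m} there exist a finite word k over {1, …, n} and finitely many finite words j₁, …, j_p over {1, …, n}, each of length at most n₀, such that the cylinders F_{k j₁}, …, F_{k j_p} are pairwise disjoint and f(E_i) = F_{k j₁} ∪ ⋯ ∪ F_{k j_p} ⊆ F_k. -/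
open Set Metric MeasureTheory

noncomputable section

/-- Two subsets of a metric space are Lipschitz equivalent if there is a
bi-Lipschitz bijection between them. -/
def LipschitzEquivalent {X : Type*} [MetricSpace X] (E F : Set X) : Prop :=
  ∃ (f : X → X) (C : ℝ), 0 < C ∧ Set.BijOn f E F ∧
    ∀ x ∈ E, ∀ y ∈ E,
      C⁻¹ * dist x y ≤ dist (f x) (f y) ∧ dist (f x) (f y) ≤ C * dist x y

/-- `φ` is a similarity with ratio `r`. -/
def IsSimilarity {X : Type*} [MetricSpace X] (r : ℝ) (φ : X → X) : Prop :=
  ∀ x y, dist (φ x) (φ y) = r * dist x y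

/-- `ρ = (ρ₁, …, ρ_m)` is a contraction vector for `ℝ^d`. -/
def IsContractionVector (d m : ℕ) (ρ : Fin m → ℝ) : Prop :=
  (∀ j, ρ j ∈ Set.Ioo (0:ℝ) 1) ∧ ∑ j, ρ j ^ d < 1

/-- `E` is a dust-like self-similar set with contraction vector `ρ`,
i.e. `E ∈ D(ρ)`. -/
def IsDustLike {X : Type*} [MetricSpace X] {m : ℕ} (ρ : Fin m → ℝ) (E : Set X) : Prop :=
  E.Nonempty ∧ IsCompact E ∧
  ∃ φ : Fin m → X → X,
    (∀ j, IsSimilarity (ρ j) (φ j)) ∧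
    E = ⋃ j, φ j '' E ∧
    Pairwise fun j k => Disjoint (φ j '' E) (φ k '' E)
/-- For a finite word `w = i₁⋯i_k`, the composed map `φ_w = φ_{i₁} ∘ ⋯ ∘ φ_{i_k}`
(the identity for the empty word). `wordMap φ w '' E` is the cylinder `E_w`. -/
def wordMap {X : Type*} {m : ℕ} (φ : Fin m → X → X) (w : List (Fin m)) : X → X :=
  w.foldr (fun i g => φ i ∘ g) id

/-!
The image `A = f(E_i)` of a cylinder has diameter at most `C ρ_i diam E`, and since distinct
first-level cylinders of `E` are at distance at least `c_E`, it lies at distance at least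
`C⁻¹ c_E ρ_i` from `F \ A`. In a cylinder `F_k` containing `A` none of whose children contains
`A`, the set `A` meets two children, so `τ_k c_F ≤ diam A`, i.e. `τ_k` is at most a constant
times `ρ_i`. Hence the subcylinders of `F_k` of relative level `N` have diameter at most
`τ_k θ^N diam F` (`θ = max τ_j`), which for a suitable `N` independent of `i` is smaller than
the gap around `A`: each of them lies in `A` or misses it, and `A` is the disjoint union of those
it meets.
-/

open Function

section Similarity

variable {X : Type*} [MetricSpace X] {r s : ℝ} {f g : X → X}

theorem IsSimilarity.comp (hf : IsSimilarity r f) (hg : IsSimilarity s g) :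
    IsSimilarity (r * s) (f ∘ g) := fun x y => by
  rw [comp_apply, comp_apply, hf, hg, mul_assoc]

theorem IsSimilarity.injective (hf : IsSimilarity r f) (hr : 0 < r) : Injective f :=
  fun x y h => dist_eq_zero.1 <|
    (mul_eq_zero.1 ((hf x y).symm.trans (by rw [h, dist_self]))).resolve_left hr.ne'

theorem IsSimilarity.lipschitzWith (hf : IsSimilarity r f) : LipschitzWith r.toNNReal f :=
  LipschitzWith.of_dist_le_mul fun x y =>
    (hf x y).le.trans (mul_le_mul_of_nonneg_right (Real.le_coe_toNNReal r) dist_nonneg)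

end Similarity

theorem IsContractionVector.pos {d m : ℕ} {ρ : Fin m → ℝ} (hρ : IsContractionVector d m ρ)
    (j : Fin m) : 0 < ρ j :=
  (hρ.1 j).1

theorem IsContractionVector.lt_one {d m : ℕ} {ρ : Fin m → ℝ} (hρ : IsContractionVector d m ρ)
    (j : Fin m) : ρ j < 1 :=
  (hρ.1 j).2

theorem List.prod_map_le_pow_length_of_le {ι : Type*} {τ : ι → ℝ} {θ : ℝ}
    (hτ : ∀ j, 0 ≤ τ j) (hτθ : ∀ j, τ j ≤ θ) (u : List ι) :
    (u.map τ).prod ≤ θ ^ u.length := by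
  simpa using List.prod_map_le_prod_map₀ τ (fun _ => θ) (fun j _ => hτ j) (fun j _ => hτθ j)

theorem exists_nonneg_lt_one_forall_le {ι : Type*} [Finite ι] {τ : ι → ℝ}
    (h : ∀ j, τ j < 1) : ∃ θ, 0 ≤ θ ∧ θ < 1 ∧ ∀ j, τ j ≤ θ := by
  cases isEmpty_or_nonempty ι
  · exact ⟨0, le_rfl, one_pos, isEmptyElim⟩
  obtain ⟨j₀, hj₀⟩ := Finite.exists_max τ
  exact ⟨max (τ j₀) 0, le_max_right _ _, max_lt (h j₀) one_pos,
    fun j => (hj₀ j).trans (le_max_left _ _)⟩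

theorem exists_pow_mul_lt {θ : ℝ} (hθ0 : 0 ≤ θ) (hθ1 : θ < 1) (a : ℝ) {b : ℝ} (hb : 0 < b) :
    ∃ N : ℕ, θ ^ N * a < b :=
  (((tendsto_pow_atTop_nhds_zero_of_lt_one hθ0 hθ1).mul_const a).eventually
    (gt_mem_nhds (by simpa using hb))).exists

section Words

variable {X : Type*} {m : ℕ} (φ : Fin m → X → X)

@[simp] theorem wordMap_nil : wordMap φ [] = id := rfl

@[simp] theorem wordMap_cons (a : Fin m) (w : List (Fin m)) :
    wordMap φ (a :: w) = φ a ∘ wordMap φ w := rfl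

theorem wordMap_append (u v : List (Fin m)) :
    wordMap φ (u ++ v) = wordMap φ u ∘ wordMap φ v := by
  induction u with
  | nil => rfl
  | cons a u ih => rw [List.cons_append, wordMap_cons, wordMap_cons, ih, comp_assoc]

variable {φ} {E : Set X}

theorem mapsTo_of_eq_iUnion_image (hE : E = ⋃ j, φ j '' E) (j : Fin m) : MapsTo (φ j) E E :=
  fun x hx => by rw [hE]; exact mem_iUnion.2 ⟨j, mem_image_of_mem _ hx⟩

theorem mapsTo_wordMap (h : ∀ j, MapsTo (φ j) E E) (w : List (Fin m)) :
    MapsTo (wordMap φ w) E E := by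
  induction w with
  | nil => exact mapsTo_id E
  | cons a w ih => exact (h a).comp ih

theorem iUnion_wordMap_ofFn_image (hE : E = ⋃ j, φ j '' E) (N : ℕ) :
    ⋃ w : Fin N → Fin m, wordMap φ (List.ofFn w) '' E = E := by
  induction N with
  | zero => simp [iUnion_const]
  | succ N ih =>
    ext x
    conv_rhs => rw [hE, ← ih]
    simp [Fin.exists_fin_succ_pi, List.ofFn_succ, image_comp, image_iUnion]

theorem disjoint_wordMap_image (hinj : ∀ j, Injective (φ j)) (hmaps : ∀ j, MapsTo (φ j) E E)
    (hdisj : Pairwise fun j k => Disjoint (φ j '' E) (φ k '' E)) :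
    ∀ {u v : List (Fin m)}, u.length = v.length → u ≠ v →
      Disjoint (wordMap φ u '' E) (wordMap φ v '' E)
  | [], [], _, huv => absurd rfl huv
  | a :: u, b :: v, hlen, huv => by
    simp only [wordMap_cons, image_comp]
    by_cases hab : a = b
    · subst hab
      refine (disjoint_image_iff (hinj a)).2 (disjoint_wordMap_image hinj hmaps hdisj ?_ ?_)
      · simpa using hlen
      · simpa using huv
    · exact (hdisj hab).mono (image_mono (mapsTo_wordMap hmaps u).image_subset)
        (image_mono (mapsTo_wordMap hmaps v).image_subset)

theorem exists_eq_iUnion_wordMap_append_image (hinj : ∀ j, Injective (φ j))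
    (hE : E = ⋃ j, φ j '' E) (hdisj : Pairwise fun j k => Disjoint (φ j '' E) (φ k '' E))
    {S : Set X} {w : List (Fin m)} {N : ℕ} (hSw : S ⊆ wordMap φ w '' E)
    (hS : ∀ v : Fin N → Fin m, (wordMap φ (w ++ List.ofFn v) '' E ∩ S).Nonempty →
      wordMap φ (w ++ List.ofFn v) '' E ⊆ S) :
    ∃ (p : ℕ) (vs : Fin p → List (Fin m)), (∀ r, (vs r).length ≤ N) ∧
      (Pairwise fun r r' =>
        Disjoint (wordMap φ (w ++ vs r) '' E) (wordMap φ (w ++ vs r') '' E)) ∧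
      S = ⋃ r, wordMap φ (w ++ vs r) '' E := by
  obtain ⟨p, ⟨e⟩⟩ := Finite.exists_equiv_fin
    {v : Fin N → Fin m // (wordMap φ (w ++ List.ofFn v) '' E ∩ S).Nonempty}
  refine ⟨p, fun r => List.ofFn (e.symm r).1, fun r => by simp, fun r r' hrr' => ?_, ?_⟩
  · refine disjoint_wordMap_image hinj (mapsTo_of_eq_iUnion_image hE) hdisj (by simp)
      fun h => hrr' (e.symm.injective (Subtype.ext ?_))
    exact List.ofFn_injective (List.append_cancel_left h)
  · refine Subset.antisymm (fun x hx => ?_) (iUnion_subset fun r => hS _ (e.symm r).2)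
    obtain ⟨y, hy, rfl⟩ := hSw hx
    rw [← iUnion_wordMap_ofFn_image hE N] at hy
    obtain ⟨v, hv⟩ := mem_iUnion.1 hy
    have hxv : wordMap φ w y ∈ wordMap φ (w ++ List.ofFn v) '' E := by
      rw [wordMap_append, image_comp]
      exact mem_image_of_mem _ hv
    exact mem_iUnion.2 ⟨e ⟨v, _, hxv, hx⟩, by simpa using hxv⟩

end Words

section Separation

variable {X : Type*} [MetricSpace X]

theorem exists_pos_le_dist_of_disjoint {K L : Set X} (hK : IsCompact K) (hL : IsClosed L)
    (h : Disjoint K L) : ∃ c > 0, ∀ x ∈ K, ∀ y ∈ L, c ≤ dist x y := by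
  obtain ⟨r, hr, hrKL⟩ := Metric.exists_pos_forall_lt_edist hK hL h
  refine ⟨r, hr, fun x hx y hy => ?_⟩
  have := hrKL x hx y hy
  rw [edist_nndist, ENNReal.coe_lt_coe, ← NNReal.coe_lt_coe, coe_nndist] at this
  exact this.le

theorem exists_pos_le_dist_of_pairwise_disjoint {ι : Type*} [Finite ι] {K : ι → Set X}
    (hK : ∀ j, IsCompact (K j)) (hdisj : Pairwise fun j k => Disjoint (K j) (K k)) :
    ∃ c > 0, ∀ j k, j ≠ k → ∀ x ∈ K j, ∀ y ∈ K k, c ≤ dist x y := by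
  have hpair : ∀ p : ι × ι, ∃ c > 0, p.1 ≠ p.2 → ∀ x ∈ K p.1, ∀ y ∈ K p.2, c ≤ dist x y := by
    rintro ⟨j, k⟩
    by_cases hjk : j = k
    · exact ⟨1, one_pos, fun h => absurd hjk h⟩
    · obtain ⟨c, hc, hcK⟩ := exists_pos_le_dist_of_disjoint (hK j) (hK k).isClosed (hdisj hjk)
      exact ⟨c, hc, fun _ => hcK⟩
  choose c hc0 hc using hpair
  cases isEmpty_or_nonempty ι
  · exact ⟨1, one_pos, fun j => isEmptyElim j⟩
  obtain ⟨p, hp⟩ := Finite.exists_min c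
  exact ⟨c p, hc0 p, fun j k hjk x hx y hy => (hp (j, k)).trans (hc (j, k) hjk x hx y hy)⟩

end Separation

section Cylinders

variable {X : Type*} [MetricSpace X] {m : ℕ} {ρ : Fin m → ℝ} {φ : Fin m → X → X} {E : Set X}

theorem isSimilarity_wordMap (hφ : ∀ j, IsSimilarity (ρ j) (φ j)) (w : List (Fin m)) :
    IsSimilarity (w.map ρ).prod (wordMap φ w) := by
  induction w with
  | nil => exact fun x y => (one_mul _).symm
  | cons a w ih => simpa using (hφ a).comp ih

theorem dist_le_prod_mul_diam_of_mem_wordMap_image (hρ : ∀ j, 0 ≤ ρ j)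
    (hφ : ∀ j, IsSimilarity (ρ j) (φ j)) (hE : Bornology.IsBounded E) {w : List (Fin m)}
    {x y : X} (hx : x ∈ wordMap φ w '' E) (hy : y ∈ wordMap φ w '' E) :
    dist x y ≤ (w.map ρ).prod * diam E := by
  obtain ⟨x, hx, rfl⟩ := hx
  obtain ⟨y, hy, rfl⟩ := hy
  rw [isSimilarity_wordMap hφ w]
  exact mul_le_mul_of_nonneg_left (dist_le_diam_of_mem hE hx hy)
    (List.prod_nonneg (by simp [hρ]))

theorem mul_prod_le_dist_of_mem_wordMap_image (hρ0 : ∀ j, 0 < ρ j) (hρ1 : ∀ j, ρ j ≤ 1)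
    (hφ : ∀ j, IsSimilarity (ρ j) (φ j)) (hE : E = ⋃ j, φ j '' E) {c : ℝ} (hc0 : 0 ≤ c)
    (hc : ∀ j k, j ≠ k → ∀ x ∈ φ j '' E, ∀ y ∈ φ k '' E, c ≤ dist x y) :
    ∀ (w : List (Fin m)) {x y : X}, x ∈ wordMap φ w '' E → y ∈ E → y ∉ wordMap φ w '' E →
      c * (w.map ρ).prod ≤ dist x y
  | [], _, _, _, hy, hyw => absurd (by simpa using hy) hyw
  | a :: w, x, y, hx, hy, hyw => by
    rw [wordMap_cons, image_comp] at hx hyw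
    obtain ⟨x, hx, rfl⟩ := hx
    by_cases hya : y ∈ φ a '' E
    · obtain ⟨y, hyE, rfl⟩ := hya
      have hyw : y ∉ wordMap φ w '' E := fun h => hyw (mem_image_of_mem _ h)
      calc c * ((a :: w).map ρ).prod = ρ a * (c * (w.map ρ).prod) := by
            rw [List.map_cons, List.prod_cons]; ring
        _ ≤ ρ a * dist x y := mul_le_mul_of_nonneg_left
            (mul_prod_le_dist_of_mem_wordMap_image hρ0 hρ1 hφ hE hc0 hc w hx hyE hyw)
            (hρ0 a).le
        _ = dist (φ a x) (φ a y) := (hφ a x y).symm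
    · rw [hE] at hy
      obtain ⟨b, hyb⟩ := mem_iUnion.1 hy
      have hab : a ≠ b := fun h => hya (h ▸ hyb)
      have hxE := (mapsTo_wordMap (mapsTo_of_eq_iUnion_image hE) w).image_subset hx
      have hx' : φ a x ∈ φ a '' E := mem_image_of_mem _ hxE
      refine le_trans ?_ (hc a b hab _ hx' _ hyb)
      exact mul_le_of_le_one_right hc0
        (List.prod_map_le_pow_length_of_le (fun j => (hρ0 j).le) hρ1 _ |>.trans (by simp))

end Cylinders

section Subcylinders

variable {X : Type*} [MetricSpace X] {m : ℕ} {ρ : Fin m → ℝ} {φ : Fin m → X → X} {E : Set X}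

theorem exists_subset_wordMap_append_singleton_image (hρ : ∀ j, 0 ≤ ρ j)
    (hφ : ∀ j, IsSimilarity (ρ j) (φ j)) (hE : E = ⋃ j, φ j '' E) {c δ : ℝ}
    (hc : ∀ j k, j ≠ k → ∀ x ∈ φ j '' E, ∀ y ∈ φ k '' E, c ≤ dist x y)
    {S : Set X} (hSne : S.Nonempty) (hS : ∀ x ∈ S, ∀ y ∈ S, dist x y ≤ δ) {w : List (Fin m)}
    (hSw : S ⊆ wordMap φ w '' E) (hδ : δ < (w.map ρ).prod * c) :
    ∃ j, S ⊆ wordMap φ (w ++ [j]) '' E := by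
  have hchild : ∀ x ∈ S, ∃ j, ∃ y ∈ φ j '' E, x = wordMap φ w y := fun x hx => by
    obtain ⟨y, hy, rfl⟩ := hSw hx
    rw [hE] at hy
    obtain ⟨j, hj⟩ := mem_iUnion.1 hy
    exact ⟨j, y, hj, rfl⟩
  obtain ⟨x₀, hx₀⟩ := hSne
  obtain ⟨j, y₀, hy₀, rfl⟩ := hchild x₀ hx₀
  refine ⟨j, fun x hx => ?_⟩
  obtain ⟨k, y, hy, rfl⟩ := hchild x hx
  obtain rfl : k = j := by
    by_contra hkj
    have : (w.map ρ).prod * c ≤ δ := calc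
      (w.map ρ).prod * c ≤ (w.map ρ).prod * dist y₀ y :=
        mul_le_mul_of_nonneg_left (hc j k (Ne.symm hkj) y₀ hy₀ y hy)
          (List.prod_nonneg (by simp [hρ]))
      _ = dist (wordMap φ w y₀) (wordMap φ w y) := (isSimilarity_wordMap hφ w _ _).symm
      _ ≤ δ := hS _ hx₀ _ hx
    linarith
  rw [wordMap_append, image_comp]
  exact mem_image_of_mem _ (by simpa using hy)

/-- Cylinders containing the two points of `S` cannot be arbitrarily deep, so some cylinder
containing `S` has no child containing `S`; then `S` meets two of its children. -/
theorem exists_subset_wordMap_image_prod_mul_le (hρ : ∀ j, 0 ≤ ρ j) {θ : ℝ}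
    (hρθ : ∀ j, ρ j ≤ θ) (hθ0 : 0 ≤ θ) (hθ1 : θ < 1) (hφ : ∀ j, IsSimilarity (ρ j) (φ j))
    (hE : E = ⋃ j, φ j '' E) (hEb : Bornology.IsBounded E) {c δ : ℝ}
    (hc : ∀ j k, j ≠ k → ∀ x ∈ φ j '' E, ∀ y ∈ φ k '' E, c ≤ dist x y)
    {S : Set X} (hSE : S ⊆ E) (hSnt : S.Nontrivial) (hS : ∀ x ∈ S, ∀ y ∈ S, dist x y ≤ δ) :
    ∃ w, S ⊆ wordMap φ w '' E ∧ (w.map ρ).prod * c ≤ δ := by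
  by_contra! hsplit
  obtain ⟨x, hx, y, hy, hxy⟩ := hSnt
  have hdeep : ∀ L, ∃ w : List (Fin m), w.length = L ∧ S ⊆ wordMap φ w '' E := by
    intro L
    induction L with
    | zero => exact ⟨[], rfl, by simpa using hSE⟩
    | succ L ih =>
      obtain ⟨w, rfl, hSw⟩ := ih
      obtain ⟨j, hj⟩ := exists_subset_wordMap_append_singleton_image hρ hφ hE hc ⟨x, hx⟩ hS hSw
        (hsplit w hSw)
      exact ⟨w ++ [j], by simp, hj⟩
  obtain ⟨L, hL⟩ := exists_pow_mul_lt hθ0 hθ1 (diam E) (dist_pos.2 hxy)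
  obtain ⟨w, rfl, hSw⟩ := hdeep L
  refine hL.not_ge ?_
  calc dist x y ≤ (w.map ρ).prod * diam E :=
        dist_le_prod_mul_diam_of_mem_wordMap_image hρ hφ hEb (hSw hx) (hSw hy)
    _ ≤ θ ^ w.length * diam E :=
        mul_le_mul_of_nonneg_right (List.prod_map_le_pow_length_of_le hρ hρθ w) diam_nonneg

theorem wordMap_image_subset_of_inter_nonempty (hρ : ∀ j, 0 ≤ ρ j)
    (hφ : ∀ j, IsSimilarity (ρ j) (φ j)) (hmaps : ∀ j, MapsTo (φ j) E E)
    (hEb : Bornology.IsBounded E) {S : Set X} {γ : ℝ}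
    (hgap : ∀ x ∈ S, ∀ y ∈ E, y ∉ S → γ ≤ dist x y) {w : List (Fin m)}
    (hw : (w.map ρ).prod * diam E < γ) (hne : (wordMap φ w '' E ∩ S).Nonempty) :
    wordMap φ w '' E ⊆ S := by
  obtain ⟨x, hxw, hxS⟩ := hne
  intro y hyw
  by_contra hyS
  have hyE := (mapsTo_wordMap hmaps w).image_subset hyw
  have := dist_le_prod_mul_diam_of_mem_wordMap_image hρ hφ hEb hxw hyw
  linarith [hgap x hxS y hyE hyS]

theorem exists_wordMap_image_superset_forall_ofFn_subset (hρ : ∀ j, 0 ≤ ρ j) {θ : ℝ}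
    (hρθ : ∀ j, ρ j ≤ θ) (hθ0 : 0 ≤ θ) (hθ1 : θ < 1) (hφ : ∀ j, IsSimilarity (ρ j) (φ j))
    (hE : E = ⋃ j, φ j '' E) (hEb : Bornology.IsBounded E) {c : ℝ} (hc0 : 0 < c)
    (hc : ∀ j k, j ≠ k → ∀ x ∈ φ j '' E, ∀ y ∈ φ k '' E, c ≤ dist x y)
    {S : Set X} (hSE : S ⊆ E) (hSnt : S.Nontrivial) {δ γ : ℝ}
    (hS : ∀ x ∈ S, ∀ y ∈ S, dist x y ≤ δ) (hgap : ∀ x ∈ S, ∀ y ∈ E, y ∉ S → γ ≤ dist x y)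
    {N : ℕ} (hN : θ ^ N * δ * diam E < γ * c) :
    ∃ w, S ⊆ wordMap φ w '' E ∧ ∀ v : Fin N → Fin m,
      (wordMap φ (w ++ List.ofFn v) '' E ∩ S).Nonempty →
        wordMap φ (w ++ List.ofFn v) '' E ⊆ S := by
  obtain ⟨w, hSw, hw⟩ := exists_subset_wordMap_image_prod_mul_le hρ hρθ hθ0 hθ1 hφ hE hEb hc hSE
    hSnt hS
  refine ⟨w, hSw, fun v => wordMap_image_subset_of_inter_nonempty hρ hφ
    (mapsTo_of_eq_iUnion_image hE) hEb hgap ?_⟩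
  have hv := List.prod_map_le_pow_length_of_le hρ hρθ (List.ofFn v)
  rw [List.length_ofFn] at hv
  have hδ : 0 ≤ δ := (mul_nonneg (List.prod_nonneg (by simp [hρ])) hc0.le).trans hw
  rw [List.map_append, List.prod_append]
  refine lt_of_mul_lt_mul_right (lt_of_le_of_lt ?_ hN) hc0.le
  calc (w.map ρ).prod * ((List.ofFn v).map ρ).prod * diam E * c
      = (w.map ρ).prod * c * (((List.ofFn v).map ρ).prod * diam E) := by ring
    _ ≤ δ * (θ ^ N * diam E) := mul_le_mul hw (mul_le_mul_of_nonneg_right hv diam_nonneg)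
        (mul_nonneg (List.prod_nonneg (by simp [hρ])) diam_nonneg) hδ
    _ = θ ^ N * δ * diam E := by ring

end Subcylinders

section BiLipschitzImage

variable {X Y : Type*} [MetricSpace X] [MetricSpace Y] {m : ℕ} {ρ : Fin m → ℝ}
  {φ : Fin m → X → X} {E : Set X} {f : X → Y} {K : ℝ}

theorem dist_le_of_mem_image_wordMap_image (hρ : ∀ j, 0 ≤ ρ j)
    (hφ : ∀ j, IsSimilarity (ρ j) (φ j)) (hmaps : ∀ j, MapsTo (φ j) E E)
    (hEb : Bornology.IsBounded E) (hf : ∀ x ∈ E, ∀ y ∈ E, dist (f x) (f y) ≤ K * dist x y)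
    (hK : 0 ≤ K) (w : List (Fin m)) :
    ∀ a ∈ f '' (wordMap φ w '' E), ∀ b ∈ f '' (wordMap φ w '' E),
      dist a b ≤ K * ((w.map ρ).prod * diam E) := by
  rintro _ ⟨x, hx, rfl⟩ _ ⟨y, hy, rfl⟩
  have hEw := (mapsTo_wordMap hmaps w).image_subset
  exact (hf x (hEw hx) y (hEw hy)).trans (mul_le_mul_of_nonneg_left
    (dist_le_prod_mul_diam_of_mem_wordMap_image hρ hφ hEb hx hy) hK)

theorem le_dist_of_mem_image_wordMap_image (hρ0 : ∀ j, 0 < ρ j) (hρ1 : ∀ j, ρ j ≤ 1)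
    (hφ : ∀ j, IsSimilarity (ρ j) (φ j)) (hE : E = ⋃ j, φ j '' E) {c : ℝ} (hc0 : 0 ≤ c)
    (hc : ∀ j k, j ≠ k → ∀ x ∈ φ j '' E, ∀ y ∈ φ k '' E, c ≤ dist x y)
    (hf : ∀ x ∈ E, ∀ y ∈ E, K * dist x y ≤ dist (f x) (f y)) (hK : 0 ≤ K) {F : Set Y}
    (hF : F ⊆ f '' E) (w : List (Fin m)) :
    ∀ a ∈ f '' (wordMap φ w '' E), ∀ b ∈ F, b ∉ f '' (wordMap φ w '' E) →
      K * (c * (w.map ρ).prod) ≤ dist a b := by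
  rintro _ ⟨x, hx, rfl⟩ b hb hbw
  obtain ⟨y, hy, rfl⟩ := hF hb
  have hyw : y ∉ wordMap φ w '' E := fun h => hbw (mem_image_of_mem f h)
  have hEw := (mapsTo_wordMap (mapsTo_of_eq_iUnion_image hE) w).image_subset
  exact (mul_le_mul_of_nonneg_left
    (mul_prod_le_dist_of_mem_wordMap_image hρ0 hρ1 hφ hE hc0 hc w hx hy hyw) hK).trans
    (hf x (hEw hx) y hy)

end BiLipschitzImage

theorem falconer_marsh_fundamental_lemma_general
    (d m n : ℕ)
    (ρ : Fin m → ℝ) (τ : Fin n → ℝ)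
    (hρ : IsContractionVector d m ρ) (hτ : IsContractionVector d n τ)
    (E F : Set (EuclideanSpace ℝ (Fin d)))
    (hEcomp : IsCompact E)
    (φ : Fin m → EuclideanSpace ℝ (Fin d) → EuclideanSpace ℝ (Fin d))
    (hφ : ∀ j, IsSimilarity (ρ j) (φ j))
    (hEdef : E = ⋃ j, φ j '' E)
    (hEdisj : Pairwise fun j k => Disjoint (φ j '' E) (φ k '' E))
    (hFcomp : IsCompact F)
    (ψ : Fin n → EuclideanSpace ℝ (Fin d) → EuclideanSpace ℝ (Fin d))
    (hψ : ∀ j, IsSimilarity (τ j) (ψ j))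
    (hFdef : F = ⋃ j, ψ j '' F)
    (hFdisj : Pairwise fun j k => Disjoint (ψ j '' F) (ψ k '' F))
    (f : EuclideanSpace ℝ (Fin d) → EuclideanSpace ℝ (Fin d)) (C : ℝ) (hC : 0 < C)
    (hbij : Set.BijOn f E F)
    (hlip : ∀ x ∈ E, ∀ y ∈ E,
      C⁻¹ * dist x y ≤ dist (f x) (f y) ∧ dist (f x) (f y) ≤ C * dist x y) :
    ∃ n₀ : ℕ, ∀ i : List (Fin m), i ≠ [] →
      ∃ (k : List (Fin n)) (p : ℕ) (js : Fin p → List (Fin n)),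
        (∀ r, (js r).length ≤ n₀) ∧
        (Pairwise fun r r' =>
          Disjoint (wordMap ψ (k ++ js r) '' F) (wordMap ψ (k ++ js r') '' F)) ∧
        f '' (wordMap φ i '' E) = ⋃ r, wordMap ψ (k ++ js r) '' F ∧
        f '' (wordMap φ i '' E) ⊆ wordMap ψ k '' F := by
  obtain ⟨θ, hθ0, hθ1, hτθ⟩ := exists_nonneg_lt_one_forall_le hτ.lt_one
  obtain ⟨cE, hcE0, hcE⟩ := exists_pos_le_dist_of_pairwise_disjoint
    (fun j => hEcomp.image (hφ j).lipschitzWith.continuous) hEdisj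
  obtain ⟨cF, hcF0, hcF⟩ := exists_pos_le_dist_of_pairwise_disjoint
    (fun j => hFcomp.image (hψ j).lipschitzWith.continuous) hFdisj
  obtain ⟨N, hN⟩ := exists_pow_mul_lt hθ0 hθ1 (C * diam E * diam F)
    (by positivity : 0 < C⁻¹ * cE * cF)
  refine ⟨N, fun i _ => ?_⟩
  have hρi : 0 < (i.map ρ).prod := List.prod_pos (by simp [hρ.pos])
  have hEi := (mapsTo_wordMap (mapsTo_of_eq_iUnion_image hEdef) i).image_subset
  set A := f '' (wordMap φ i '' E)
  have hAF : A ⊆ F := hbij.image_eq ▸ image_mono hEi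
  obtain ⟨k, hAk, hA⟩ : ∃ k, A ⊆ wordMap ψ k '' F ∧ ∀ v : Fin N → Fin n,
      (wordMap ψ (k ++ List.ofFn v) '' F ∩ A).Nonempty →
        wordMap ψ (k ++ List.ofFn v) '' F ⊆ A := by
    rcases F.subsingleton_or_nontrivial with hF | hF
    · refine ⟨[], by simpa using hAF, fun v ⟨y, hy, hyA⟩ x hx => ?_⟩
      have hψmaps := mapsTo_wordMap (mapsTo_of_eq_iUnion_image hFdef) ([] ++ List.ofFn v)
      exact hF.anti hψmaps.image_subset hy hx ▸ hyA
    have hAnt := ((nontrivial_of_image f E (hbij.image_eq ▸ hF)).image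
      ((isSimilarity_wordMap hφ i).injective hρi)).image_of_injOn (hbij.injOn.mono hEi)
    refine exists_wordMap_image_superset_forall_ofFn_subset (fun j => (hτ.pos j).le) hτθ hθ0
      hθ1 hψ hFdef hFcomp.isBounded hcF0 hcF hAF hAnt
      (dist_le_of_mem_image_wordMap_image (fun j => (hρ.pos j).le) hφ
        (mapsTo_of_eq_iUnion_image hEdef) hEcomp.isBounded (fun x hx y hy => (hlip x hx y hy).2)
        hC.le i)
      (le_dist_of_mem_image_wordMap_image hρ.pos (fun j => (hρ.lt_one j).le) hφ hEdef hcE0.le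
        hcE (fun x hx y hy => (hlip x hx y hy).1) (inv_pos.2 hC).le hbij.image_eq.ge i) ?_
    calc θ ^ N * (C * ((i.map ρ).prod * diam E)) * diam F
        = θ ^ N * (C * diam E * diam F) * (i.map ρ).prod := by ring
      _ < C⁻¹ * cE * cF * (i.map ρ).prod := mul_lt_mul_of_pos_right hN hρi
      _ = C⁻¹ * (cE * (i.map ρ).prod) * cF := by ring
  obtain ⟨p, js, hlen, hdisj, hAeq⟩ := exists_eq_iUnion_wordMap_append_image
    (fun j => (hψ j).injective (hτ.pos j)) hFdef hFdisj hAk hA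
  exact ⟨k, p, js, hlen, hdisj, hAeq, hAk⟩

theorem falconer_marsh_fundamental_lemma
    (d m n : ℕ) (hd : 1 ≤ d)
    (ρ : Fin m → ℝ) (τ : Fin n → ℝ)
    (hρ : IsContractionVector d m ρ) (hτ : IsContractionVector d n τ)
    (E F : Set (EuclideanSpace ℝ (Fin d)))
    (hEne : E.Nonempty) (hEcomp : IsCompact E)
    (φ : Fin m → EuclideanSpace ℝ (Fin d) → EuclideanSpace ℝ (Fin d))
    (hφ : ∀ j, IsSimilarity (ρ j) (φ j))
    (hEdef : E = ⋃ j, φ j '' E)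
    (hEdisj : Pairwise fun j k => Disjoint (φ j '' E) (φ k '' E))
    (hFne : F.Nonempty) (hFcomp : IsCompact F)
    (ψ : Fin n → EuclideanSpace ℝ (Fin d) → EuclideanSpace ℝ (Fin d))
    (hψ : ∀ j, IsSimilarity (τ j) (ψ j))
    (hFdef : F = ⋃ j, ψ j '' F)
    (hFdisj : Pairwise fun j k => Disjoint (ψ j '' F) (ψ k '' F))
    (f : EuclideanSpace ℝ (Fin d) → EuclideanSpace ℝ (Fin d)) (C : ℝ) (hC : 0 < C)
    (hbij : Set.BijOn f E F)
    (hlip : ∀ x ∈ E, ∀ y ∈ E,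
      C⁻¹ * dist x y ≤ dist (f x) (f y) ∧ dist (f x) (f y) ≤ C * dist x y) :
    ∃ n₀ : ℕ, ∀ i : List (Fin m), i ≠ [] →
      ∃ (k : List (Fin n)) (p : ℕ) (js : Fin p → List (Fin n)),
        (∀ r, (js r).length ≤ n₀) ∧
        (Pairwise fun r r' =>
          Disjoint (wordMap ψ (k ++ js r) '' F) (wordMap ψ (k ++ js r') '' F)) ∧
        f '' (wordMap φ i '' E) = ⋃ r, wordMap ψ (k ++ js r) '' F ∧
        f '' (wordMap φ i '' E) ⊆ wordMap ψ k '' F :=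
  falconer_marsh_fundamental_lemma_general d m n ρ τ hρ hτ E F hEcomp φ hφ hEdef hEdisj hFcomp ψ hψ
    hFdef hFdisj f C hC hbij hlip
end
end

section
/- Suppose {E_i}_{i∈V} and {F_i}_{i∈V} are dust-like graph-directed sets on the same finite directed multigraph (V, Γ), in ℝ^d, having the same graph-directed structure (i.e. for every edge e ∈ Γ the defining similarities φ_e for {E_i} and ψ_e for {F_i} have the same contraction ratio ρ_e). Then E_i and F_i are Lipschitz equivalent for every vertex i ∈ V. -/
open Set Metric MeasureTheory

noncomputable section

/-- `{Es i}_{i ∈ Fin ℓ}` is a family of dust-like graph-directed sets on the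
finite directed multigraph with vertex set `Fin ℓ`, edge set `Γ` (with source
and target maps `src`, `tgt`), where the edge `e` carries the similarity `φ e`
of ratio `r e ∈ (0,1)`. Every vertex has an outgoing edge, each `Es i` is a
nonempty compact set with `Es i = ⋃_{e : src e = i} φ e '' Es (tgt e)`, and the
pieces of this union are pairwise disjoint. -/
def IsDustLikeGDS {X : Type*} [MetricSpace X] {ℓ : ℕ} (Γ : Type) [Fintype Γ]
    (src tgt : Γ → Fin ℓ) (r : Γ → ℝ) (φ : Γ → X → X) (Es : Fin ℓ → Set X) : Prop :=
  (∀ i, ∃ e, src e = i) ∧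
  (∀ e, r e ∈ Set.Ioo (0:ℝ) 1) ∧
  (∀ e, IsSimilarity (r e) (φ e)) ∧
  (∀ i, (Es i).Nonempty ∧ IsCompact (Es i)) ∧
  (∀ i, Es i = ⋃ e ∈ {e | src e = i}, φ e '' Es (tgt e)) ∧
  (∀ e e', e ≠ e' → src e = src e' →
    Disjoint (φ e '' Es (tgt e)) (φ e' '' Es (tgt e')))
set_option linter.unusedSectionVars false

namespace GDS
open Filter

variable {X : Type*} [MetricSpace X] {ℓ : ℕ} {Γ : Type} [Fintype Γ]

theorem sim_injective {c : ℝ} {f : X → X} (h : IsSimilarity c f) (hc : 0 < c) :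
    Function.Injective f := by
  intro a b hab
  have h2 : c * dist a b = 0 := by rw [← h a b, hab, dist_self]
  rcases mul_eq_zero.1 h2 with h3 | h3
  · exact absurd h3 hc.ne'
  · exact dist_eq_zero.1 h3

theorem sim_continuous {c : ℝ} {f : X → X} (h : IsSimilarity c f) (hc : 0 ≤ c) :
    Continuous f :=
  (LipschitzWith.of_dist_le_mul (K := c.toNNReal)
    (fun x y => by rw [h x y, Real.coe_toNNReal c hc])).continuous

noncomputable def push (g : Γ → X → X) (es : ℕ → Γ) : ℕ → X → X
  | 0 => id
  | n + 1 => push g es n ∘ g (es n)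

noncomputable def prodR (r : Γ → ℝ) (es : ℕ → Γ) (n : ℕ) : ℝ :=
  ∏ k ∈ Finset.range n, r (es k)

theorem prodR_succ (r : Γ → ℝ) (es : ℕ → Γ) (n : ℕ) :
    prodR r es (n + 1) = prodR r es n * r (es n) := Finset.prod_range_succ _ _

theorem prodR_pos {r : Γ → ℝ} (hr : ∀ e, 0 < r e) (es : ℕ → Γ) (n : ℕ) :
    0 < prodR r es n := Finset.prod_pos fun _ _ => hr _

theorem prodR_le_pow {r : Γ → ℝ} {ρ : ℝ} (h0 : ∀ e, 0 < r e) (h1 : ∀ e, r e ≤ ρ)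
    (es : ℕ → Γ) (n : ℕ) : prodR r es n ≤ ρ ^ n := by
  induction n with
  | zero => simp [prodR]
  | succ n ih =>
    rw [prodR_succ, pow_succ]
    have hρ : 0 ≤ ρ := le_trans (h0 (es 0)).le (h1 (es 0))
    exact mul_le_mul ih (h1 _) (h0 _).le (pow_nonneg hρ n)

theorem push_sim {r : Γ → ℝ} {g : Γ → X → X} (hg : ∀ e, IsSimilarity (r e) (g e))
    (es : ℕ → Γ) (n : ℕ) : IsSimilarity (prodR r es n) (push g es n) := by
  induction n with
  | zero => intro a b; simp [push, prodR]
  | succ n ih =>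
    intro a b
    show dist (push g es n (g (es n) a)) (push g es n (g (es n) b)) = _
    rw [ih _ _, hg (es n) a b, prodR_succ]; ring

theorem push_congr {g : Γ → X → X} {es es' : ℕ → Γ} {n : ℕ}
    (h : ∀ k < n, es k = es' k) : push g es n = push g es' n := by
  induction n with
  | zero => rfl
  | succ n ih =>
    show push g es n ∘ g (es n) = push g es' n ∘ g (es' n)
    rw [ih (fun k hk => h k (hk.trans n.lt_succ_self)), h n n.lt_succ_self]


open Filter

variable {X : Type*} [MetricSpace X] {ℓ : ℕ} {Γ : Type} [Fintype Γ]
variable (src tgt : Γ → Fin ℓ) (φ : Γ → X → X) (Es : Fin ℓ → Set X)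

open Classical in
noncomputable def step [Nonempty Γ] (i : Fin ℓ) (x : X) : Γ :=
  if h : ∃ e, src e = i ∧ x ∈ φ e '' Es (tgt e) then h.choose else Classical.arbitrary Γ

open Classical in
noncomputable def pre (e : Γ) (x : X) : X :=
  if h : ∃ y ∈ Es (tgt e), φ e y = x then h.choose else x

noncomputable def itin [Nonempty Γ] (i : Fin ℓ) (x : X) : ℕ → Fin ℓ × X
  | 0 => (i, x)
  | n + 1 =>
    let p := itin i x n
    let e := step src tgt φ Es p.1 p.2
    (tgt e, pre tgt φ Es e p.2)

noncomputable def edg [Nonempty Γ] (i : Fin ℓ) (x : X) (n : ℕ) : Γ :=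
  step src tgt φ Es (itin src tgt φ Es i x n).1 (itin src tgt φ Es i x n).2

variable {src tgt φ Es}
variable {r : Γ → ℝ}

theorem itin_zero [Nonempty Γ] (i : Fin ℓ) (x : X) : itin src tgt φ Es i x 0 = (i, x) := rfl

theorem itin_succ_fst [Nonempty Γ] (i : Fin ℓ) (x : X) (n : ℕ) :
    (itin src tgt φ Es i x (n + 1)).1 = tgt (edg src tgt φ Es i x n) := rfl

theorem itin_succ_snd [Nonempty Γ] (i : Fin ℓ) (x : X) (n : ℕ) :
    (itin src tgt φ Es i x (n + 1)).2
      = pre tgt φ Es (edg src tgt φ Es i x n) (itin src tgt φ Es i x n).2 := rfl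

section Spec
variable (hD : IsDustLikeGDS Γ src tgt r φ Es)
include hD

theorem piece_subset {e : Γ} {j : Fin ℓ} (he : src e = j) :
    φ e '' Es (tgt e) ⊆ Es j := by
  rw [hD.2.2.2.2.1 j]
  exact subset_biUnion_of_mem (u := fun e => φ e '' Es (tgt e)) he

theorem exists_piece {i : Fin ℓ} {x : X} (hx : x ∈ Es i) :
    ∃ e, src e = i ∧ x ∈ φ e '' Es (tgt e) := by
  rw [hD.2.2.2.2.1 i] at hx
  simpa using hx

theorem step_spec [Nonempty Γ] {i : Fin ℓ} {x : X} (hx : x ∈ Es i) :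
    src (step src tgt φ Es i x) = i ∧
      x ∈ φ (step src tgt φ Es i x) '' Es (tgt (step src tgt φ Es i x)) := by
  have h := exists_piece hD hx
  rw [step, dif_pos h]
  exact h.choose_spec

theorem step_unique [Nonempty Γ] {i : Fin ℓ} {x : X} (hx : x ∈ Es i) {e : Γ}
    (he : src e = i) (hmem : x ∈ φ e '' Es (tgt e)) :
    step src tgt φ Es i x = e := by
  by_contra hne
  have hs := step_spec hD hx
  exact absurd hmem
    (Set.disjoint_left.1 (hD.2.2.2.2.2 _ e hne (hs.1.trans he.symm)) hs.2)

theorem pre_spec {e : Γ} {x : X} (hmem : x ∈ φ e '' Es (tgt e)) :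
    pre tgt φ Es e x ∈ Es (tgt e) ∧ φ e (pre tgt φ Es e x) = x := by
  rcases hmem with ⟨y, hy, hyx⟩
  have h : ∃ y ∈ Es (tgt e), φ e y = x := ⟨y, hy, hyx⟩
  rw [pre, dif_pos h]
  exact h.choose_spec

variable [Nonempty Γ] {i : Fin ℓ} {x : X} (hx : x ∈ Es i)
include hx

theorem itin_mem (n : ℕ) : (itin src tgt φ Es i x n).2 ∈ Es (itin src tgt φ Es i x n).1 := by
  induction n with
  | zero => exact hx
  | succ n ih =>
    rw [itin_succ_fst, itin_succ_snd]
    exact (pre_spec hD (step_spec hD ih).2).1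

theorem edg_src (n : ℕ) : src (edg src tgt φ Es i x n) = (itin src tgt φ Es i x n).1 :=
  (step_spec hD (itin_mem hD hx n)).1

theorem itin_mem_piece (n : ℕ) :
    (itin src tgt φ Es i x n).2
      ∈ φ (edg src tgt φ Es i x n) '' Es (tgt (edg src tgt φ Es i x n)) :=
  (step_spec hD (itin_mem hD hx n)).2

theorem edg_map (n : ℕ) :
    φ (edg src tgt φ Es i x n) ((itin src tgt φ Es i x (n + 1)).2)
      = (itin src tgt φ Es i x n).2 := by
  rw [itin_succ_snd]
  exact (pre_spec hD (itin_mem_piece hD hx n)).2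

theorem itin_push (n : ℕ) :
    push φ (edg src tgt φ Es i x) n ((itin src tgt φ Es i x n).2) = x := by
  induction n with
  | zero => rfl
  | succ n ih =>
    show push φ (edg src tgt φ Es i x) n
      (φ (edg src tgt φ Es i x n) ((itin src tgt φ Es i x (n+1)).2)) = x
    rw [edg_map hD hx n]; exact ih

end Spec

section Constants
variable {X : Type*} [MetricSpace X] {ℓ : ℕ} {Γ : Type} [Fintype Γ]
variable {src tgt : Γ → Fin ℓ} {r : Γ → ℝ} {φ : Γ → X → X} {Es : Fin ℓ → Set X}

theorem exists_diam_bound (hD : IsDustLikeGDS Γ src tgt r φ Es) :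
    ∃ D : ℝ, 0 ≤ D ∧ ∀ j, Metric.diam (Es j) ≤ D := by
  refine ⟨∑ j, Metric.diam (Es j), Finset.sum_nonneg fun j _ => Metric.diam_nonneg, fun j => ?_⟩
  exact Finset.single_le_sum (fun k _ => Metric.diam_nonneg) (Finset.mem_univ j)

theorem exists_rho [Nonempty Γ] (hr : ∀ e, r e ∈ Set.Ioo (0:ℝ) 1) :
    ∃ ρ : ℝ, 0 ≤ ρ ∧ ρ < 1 ∧ ∀ e, r e ≤ ρ := by
  refine ⟨Finset.univ.sup' Finset.univ_nonempty r, ?_, ?_, fun e => Finset.le_sup' r (Finset.mem_univ e)⟩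
  · exact le_trans (hr (Classical.arbitrary Γ)).1.le (Finset.le_sup' r (Finset.mem_univ _))
  · exact (Finset.sup'_lt_iff Finset.univ_nonempty).2 fun e _ => (hr e).2

theorem gap_pair (hD : IsDustLikeGDS Γ src tgt r φ Es) {e e' : Γ}
    (hne : e ≠ e') (hsrc : src e = src e') :
    ∃ c : ℝ, 0 < c ∧ ∀ a ∈ φ e '' Es (tgt e), ∀ b ∈ φ e' '' Es (tgt e'), c ≤ dist a b := by
  have hc : ∀ e : Γ, IsCompact (φ e '' Es (tgt e)) := fun e =>
    (hD.2.2.2.1 (tgt e)).2.image (sim_continuous (hD.2.2.1 e) (hD.2.1 e).1.le)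
  have hn : ∀ e : Γ, (φ e '' Es (tgt e)).Nonempty := fun e =>
    (hD.2.2.2.1 (tgt e)).1.image _
  obtain ⟨⟨a0, b0⟩, hab, hmin⟩ :=
    ((hc e).prod (hc e')).exists_isMinOn ((hn e).prod (hn e'))
      (continuous_dist.continuousOn (s := (φ e '' Es (tgt e)) ×ˢ (φ e' '' Es (tgt e'))))
  refine ⟨dist a0 b0, ?_, fun a ha b hb =>
    isMinOn_iff.1 hmin (a, b) (Set.mk_mem_prod ha hb)⟩
  rw [dist_pos]
  intro h
  exact Set.disjoint_left.1 (hD.2.2.2.2.2 e e' hne hsrc) hab.1 (h ▸ hab.2)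

theorem exists_gap [Nonempty Γ] (hD : IsDustLikeGDS Γ src tgt r φ Es) :
    ∃ g : ℝ, 0 < g ∧ ∀ e e', e ≠ e' → src e = src e' →
      ∀ a ∈ φ e '' Es (tgt e), ∀ b ∈ φ e' '' Es (tgt e'), g ≤ dist a b := by
  classical
  have key : ∀ p : Γ × Γ, ∃ c : ℝ, 0 < c ∧ (p.1 ≠ p.2 → src p.1 = src p.2 →
      ∀ a ∈ φ p.1 '' Es (tgt p.1), ∀ b ∈ φ p.2 '' Es (tgt p.2), c ≤ dist a b) := by
    intro p
    by_cases h : p.1 ≠ p.2 ∧ src p.1 = src p.2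
    · obtain ⟨c, hc, hc'⟩ := gap_pair hD h.1 h.2
      exact ⟨c, hc, fun _ _ => hc'⟩
    · exact ⟨1, one_pos, fun h1 h2 => absurd ⟨h1, h2⟩ h⟩
  choose c hc0 hc using key
  refine ⟨Finset.univ.inf' Finset.univ_nonempty c, ?_, ?_⟩
  · exact (Finset.lt_inf'_iff _).2 fun p _ => hc0 p
  · intro e e' hne hsrc a ha b hb
    exact le_trans (Finset.inf'_le c (Finset.mem_univ (e, e'))) (hc (e, e') hne hsrc a ha b hb)

end Constants


section TMap
variable {X : Type*} [MetricSpace X] [CompleteSpace X] [Nonempty X]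
variable {ℓ : ℕ} {Γ : Type} [Fintype Γ] [Nonempty Γ]
variable (src tgt : Γ → Fin ℓ) {r : Γ → ℝ} (φ ψ : Γ → X → X) (Es Fs : Fin ℓ → Set X)
variable (q : Fin ℓ → X)

/-- the approximating sequence -/
noncomputable def tseq (i : Fin ℓ) (x : X) (n : ℕ) : X :=
  push ψ (edg src tgt φ Es i x) n (q ((itin src tgt φ Es i x n).1))

/-- the transfer map -/
noncomputable def tmap (i : Fin ℓ) (x : X) : X :=
  limUnder Filter.atTop (tseq src tgt φ ψ Es q i x)

variable {src tgt φ ψ Es Fs q}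

theorem push_image_antitone (hB : IsDustLikeGDS Γ src tgt r ψ Fs)
    {es : ℕ → Γ} {js : ℕ → Fin ℓ}
    (hsrc : ∀ n, src (es n) = js n) (htgt : ∀ n, tgt (es n) = js (n + 1)) :
    ∀ {n m : ℕ}, n ≤ m → push ψ es m '' Fs (js m) ⊆ push ψ es n '' Fs (js n) := by
  intro n m hnm
  induction m, hnm using Nat.le_induction with
  | base => exact subset_rfl
  | succ m hnm ih =>
    refine subset_trans ?_ ih
    have : push ψ es (m + 1) '' Fs (js (m + 1)) =
        push ψ es m '' (ψ (es m) '' Fs (js (m + 1))) := Set.image_comp _ _ _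
    rw [this, ← htgt m]
    exact Set.image_mono (piece_subset hB (hsrc m))

section
variable (hA : IsDustLikeGDS Γ src tgt r φ Es) (hB : IsDustLikeGDS Γ src tgt r ψ Fs)
  (hq : ∀ j, q j ∈ Fs j) {i : Fin ℓ} {x : X} (hx : x ∈ Es i)
include hA hB hq hx

theorem tmap_tendsto :
    Filter.Tendsto (tseq src tgt φ ψ Es q i x) Filter.atTop
      (nhds (tmap src tgt φ ψ Es q i x)) := by
  obtain ⟨D, hD0, hDle⟩ := exists_diam_bound hB
  obtain ⟨ρ, hρ0, hρ1, hρle⟩ := exists_rho hB.2.1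
  have hcauchy : CauchySeq (tseq src tgt φ ψ Es q i x) := by
    apply cauchySeq_of_le_geometric ρ D hρ1
    intro n
    set es := edg src tgt φ Es i x with hes
    set js := fun n => (itin src tgt φ Es i x n).1 with hjs
    have heq : tseq src tgt φ ψ Es q i x (n + 1)
        = push ψ es n (ψ (es n) (q (js (n + 1)))) := rfl
    have h1 : dist (tseq src tgt φ ψ Es q i x n) (tseq src tgt φ ψ Es q i x (n + 1))
        = prodR r es n * dist (q (js n)) (ψ (es n) (q (js (n + 1)))) := by
      rw [heq]
      exact push_sim hB.2.2.1 es n _ _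
    have hmem2 : ψ (es n) (q (js (n + 1))) ∈ Fs (js n) := by
      apply piece_subset hB (edg_src hA hx n)
      have : tgt (es n) = js (n + 1) :=
        (itin_succ_fst (src := src) (φ := φ) (Es := Es) i x n).symm
      rw [this]
      exact Set.mem_image_of_mem _ (hq _)
    have h2 : dist (q (js n)) (ψ (es n) (q (js (n + 1)))) ≤ D :=
      le_trans (Metric.dist_le_diam_of_mem (hB.2.2.2.1 (js n)).2.isBounded (hq _) hmem2)
        (hDle _)
    have h3 : prodR r es n ≤ ρ ^ n := prodR_le_pow (fun e => (hB.2.1 e).1) hρle es n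
    have h4 : (0:ℝ) ≤ prodR r es n := (prodR_pos (fun e => (hB.2.1 e).1) es n).le
    rw [h1]
    calc prodR r es n * dist (q (js n)) (ψ (es n) (q (js (n + 1))))
        ≤ ρ ^ n * D := mul_le_mul h3 h2 dist_nonneg (pow_nonneg hρ0 n)
      _ = D * ρ ^ n := mul_comm _ _
  exact hcauchy.tendsto_limUnder

theorem tmap_mem_push (n : ℕ) :
    tmap src tgt φ ψ Es q i x
      ∈ push ψ (edg src tgt φ Es i x) n '' Fs ((itin src tgt φ Es i x n).1) := by
  have hcont : Continuous (push ψ (edg src tgt φ Es i x) n) :=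
    sim_continuous (push_sim hB.2.2.1 _ n)
      (prodR_pos (fun e => (hB.2.1 e).1) _ n).le
  have hcomp : IsCompact (push ψ (edg src tgt φ Es i x) n
      '' Fs ((itin src tgt φ Es i x n).1)) :=
    (hB.2.2.2.1 _).2.image hcont
  apply hcomp.isClosed.mem_of_tendsto (tmap_tendsto hA hB hq hx)
  filter_upwards [Filter.eventually_ge_atTop n] with m hm
  apply push_image_antitone hB (fun k => edg_src hA hx k) (fun k => (itin_succ_fst i x k).symm) hm
  exact Set.mem_image_of_mem _ (hq _)

theorem tmap_mem : tmap src tgt φ ψ Es q i x ∈ Fs i := by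
  have := tmap_mem_push hA hB hq hx 0
  simpa [push, itin_zero] using this

end
end TMap


section Code
variable {X : Type*} [MetricSpace X] [CompleteSpace X] [Nonempty X]
variable {ℓ : ℕ} {Γ : Type} [Fintype Γ] [Nonempty Γ]
variable {src tgt : Γ → Fin ℓ} {r : Γ → ℝ} {φ ψ : Γ → X → X} {Es Fs : Fin ℓ → Set X}
variable {q : Fin ℓ → X}

theorem itin_fst_congr (i : Fin ℓ) (x y : X) {n : ℕ}
    (h : ∀ k < n, edg src tgt φ Es i x k = edg src tgt φ Es i y k) :
    (itin src tgt φ Es i x n).1 = (itin src tgt φ Es i y n).1 := by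
  induction n with
  | zero => rfl
  | succ n ih =>
    rw [itin_succ_fst, itin_succ_fst, h n n.lt_succ_self]

theorem code_eq (hA : IsDustLikeGDS Γ src tgt r φ Es) (hB : IsDustLikeGDS Γ src tgt r ψ Fs)
    (hq : ∀ j, q j ∈ Fs j) {i : Fin ℓ} {x : X} (hx : x ∈ Es i) (n : ℕ) :
    (itin src tgt ψ Fs i (tmap src tgt φ ψ Es q i x) n).1 = (itin src tgt φ Es i x n).1 ∧
      edg src tgt ψ Fs i (tmap src tgt φ ψ Es q i x) n = edg src tgt φ Es i x n := by
  set y := tmap src tgt φ ψ Es q i x with hy_def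
  have hy : y ∈ Fs i := tmap_mem hA hB hq hx
  induction n using Nat.strong_induction_on with
  | _ n IH =>
    have hvtx : (itin src tgt ψ Fs i y n).1 = (itin src tgt φ Es i x n).1 := by
      cases n with
      | zero => rfl
      | succ m =>
        rw [itin_succ_fst, itin_succ_fst, (IH m m.lt_succ_self).2]
    have hpush : push ψ (edg src tgt ψ Fs i y) n = push ψ (edg src tgt φ Es i x) n :=
      push_congr fun k hk => (IH k hk).2
    have hy_push : push ψ (edg src tgt φ Es i x) n ((itin src tgt ψ Fs i y n).2) = y := by
      rw [← hpush]; exact itin_push hB hy n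
    have himg : y ∈ push ψ (edg src tgt φ Es i x) n ''
        (ψ (edg src tgt φ Es i x n) '' Fs (tgt (edg src tgt φ Es i x n))) := by
      have h1 := tmap_mem_push hA hB hq hx (n + 1)
      rw [itin_succ_fst] at h1
      rw [← hy_def] at h1
      exact (Set.image_comp (push ψ (edg src tgt φ Es i x) n)
        (ψ (edg src tgt φ Es i x n)) _) ▸ h1
    obtain ⟨b, hb, hby⟩ := himg
    have hinj : Function.Injective (push ψ (edg src tgt φ Es i x) n) :=
      sim_injective (push_sim hB.2.2.1 _ n) (prodR_pos (fun e => (hB.2.1 e).1) _ n)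
    have hbn : (itin src tgt ψ Fs i y n).2 = b := hinj (by rw [hy_push, hby])
    have hmem : (itin src tgt ψ Fs i y n).2
        ∈ ψ (edg src tgt φ Es i x n) '' Fs (tgt (edg src tgt φ Es i x n)) := hbn ▸ hb
    have hsrc : src (edg src tgt φ Es i x n) = (itin src tgt ψ Fs i y n).1 := by
      rw [hvtx]; exact edg_src hA hx n
    exact ⟨hvtx, step_unique hB (itin_mem hB hy n) hsrc hmem⟩

end Code


section Main
variable {X : Type*} [MetricSpace X] [CompleteSpace X] [Nonempty X]
variable {ℓ : ℕ} {Γ : Type} [Fintype Γ] [Nonempty Γ]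
variable {src tgt : Γ → Fin ℓ} {r : Γ → ℝ} {φ ψ : Γ → X → X} {Es Fs : Fin ℓ → Set X}
variable {q p : Fin ℓ → X}

theorem eq_of_code_eq (hA : IsDustLikeGDS Γ src tgt r φ Es) {i : Fin ℓ} {x y : X}
    (hx : x ∈ Es i) (hy : y ∈ Es i)
    (h : ∀ n, edg src tgt φ Es i x n = edg src tgt φ Es i y n) : x = y := by
  obtain ⟨D, hD0, hDle⟩ := exists_diam_bound hA
  obtain ⟨ρ, hρ0, hρ1, hρle⟩ := exists_rho hA.2.1
  have key : ∀ n, dist x y ≤ D * ρ ^ n := by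
    intro n
    have hvtx : (itin src tgt φ Es i x n).1 = (itin src tgt φ Es i y n).1 :=
      itin_fst_congr i x y fun k _ => h k
    have hd : dist x y
        = prodR r (edg src tgt φ Es i x) n
          * dist (itin src tgt φ Es i x n).2 (itin src tgt φ Es i y n).2 := by
      conv_lhs => rw [← itin_push hA hx n, ← itin_push hA hy n]
      rw [show push φ (edg src tgt φ Es i y) n = push φ (edg src tgt φ Es i x) n from
        push_congr fun k _ => (h k).symm]
      exact push_sim hA.2.2.1 _ n _ _
    have hmx := itin_mem hA hx n
    have hmy := itin_mem hA hy n
    rw [← hvtx] at hmy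
    have hdd : dist (itin src tgt φ Es i x n).2 (itin src tgt φ Es i y n).2 ≤ D :=
      le_trans (Metric.dist_le_diam_of_mem (hA.2.2.2.1 _).2.isBounded hmx hmy) (hDle _)
    have h3 := prodR_le_pow (fun e => (hA.2.1 e).1) hρle (edg src tgt φ Es i x) n
    have h4 := (prodR_pos (fun e => (hA.2.1 e).1) (edg src tgt φ Es i x) n).le
    calc dist x y = _ := hd
      _ ≤ ρ ^ n * D := mul_le_mul h3 hdd dist_nonneg (pow_nonneg hρ0 n)
      _ = D * ρ ^ n := mul_comm _ _
  have hlim : Filter.Tendsto (fun n : ℕ => D * ρ ^ n) Filter.atTop (nhds 0) := by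
    have := (tendsto_pow_atTop_nhds_zero_of_lt_one hρ0 hρ1).const_mul D
    simpa using this
  have : dist x y ≤ 0 := ge_of_tendsto' hlim key
  exact dist_le_zero.1 this

theorem lipschitz_bounds (hA : IsDustLikeGDS Γ src tgt r φ Es)
    (hB : IsDustLikeGDS Γ src tgt r ψ Fs) (hq : ∀ j, q j ∈ Fs j) :
    ∃ C : ℝ, 0 < C ∧ ∀ i : Fin ℓ, ∀ x ∈ Es i, ∀ y ∈ Es i,
      C⁻¹ * dist x y ≤ dist (tmap src tgt φ ψ Es q i x) (tmap src tgt φ ψ Es q i y) ∧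
      dist (tmap src tgt φ ψ Es q i x) (tmap src tgt φ ψ Es q i y) ≤ C * dist x y := by
  obtain ⟨gA, hgA, hgA'⟩ := exists_gap hA
  obtain ⟨gB, hgB, hgB'⟩ := exists_gap hB
  obtain ⟨DA, hDA0, hDAle⟩ := exists_diam_bound hA
  obtain ⟨DB, hDB0, hDBle⟩ := exists_diam_bound hB
  refine ⟨max (max 1 (DB / gA)) (DA / gB), lt_of_lt_of_le one_pos
    (le_trans (le_max_left _ _) (le_max_left _ _)), ?_⟩
  set C := max (max 1 (DB / gA)) (DA / gB) with hC_def
  have hC0 : (0:ℝ) < C := lt_of_lt_of_le one_pos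
    (le_trans (le_max_left _ _) (le_max_left _ _))
  have hC2 : DB ≤ C * gA := by
    rw [← div_le_iff₀ hgA]
    exact le_trans (le_max_right _ _) (le_max_left _ _)
  have hC3 : DA ≤ C * gB := by
    rw [← div_le_iff₀ hgB]
    exact le_max_right _ _
  intro i x hx y hy
  by_cases hcode : ∀ n, edg src tgt φ Es i x n = edg src tgt φ Es i y n
  · have hxy : x = y := eq_of_code_eq hA hx hy hcode
    subst hxy
    simp [dist_self]
  · push_neg at hcode
    obtain ⟨n, hn, hlt⟩ : ∃ n, edg src tgt φ Es i x n ≠ edg src tgt φ Es i y n ∧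
        ∀ k < n, edg src tgt φ Es i x k = edg src tgt φ Es i y k := by
      classical
      refine ⟨Nat.find hcode, Nat.find_spec hcode, fun k hk => ?_⟩
      by_contra hkk
      exact absurd hk (not_lt.2 (Nat.find_le hkk))
    set P := prodR r (edg src tgt φ Es i x) n with hP_def
    have hP : 0 < P := prodR_pos (fun e => (hA.2.1 e).1) _ n
    have hvtx : (itin src tgt φ Es i x n).1 = (itin src tgt φ Es i y n).1 :=
      itin_fst_congr i x y hlt
    have hpushA : push φ (edg src tgt φ Es i y) n = push φ (edg src tgt φ Es i x) n :=
      push_congr fun k hk => (hlt k hk).symm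
    have hpushB : push ψ (edg src tgt φ Es i y) n = push ψ (edg src tgt φ Es i x) n :=
      push_congr fun k hk => (hlt k hk).symm
    have hd : dist x y
        = P * dist (itin src tgt φ Es i x n).2 (itin src tgt φ Es i y n).2 := by
      conv_lhs => rw [← itin_push hA hx n, ← itin_push hA hy n]
      rw [hpushA]
      exact push_sim hA.2.2.1 _ n _ _
    have hsrc_eq : src (edg src tgt φ Es i x n) = src (edg src tgt φ Es i y n) := by
      rw [edg_src hA hx n, edg_src hA hy n, hvtx]
    have hgapA : gA ≤ dist (itin src tgt φ Es i x n).2 (itin src tgt φ Es i y n).2 :=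
      hgA' _ _ hn hsrc_eq _ (itin_mem_piece hA hx n) _ (itin_mem_piece hA hy n)
    have hmx := itin_mem hA hx n
    have hmy := itin_mem hA hy n
    rw [← hvtx] at hmy
    have hdiamA : dist (itin src tgt φ Es i x n).2 (itin src tgt φ Es i y n).2 ≤ DA :=
      le_trans (Metric.dist_le_diam_of_mem (hA.2.2.2.1 _).2.isBounded hmx hmy) (hDAle _)
    -- target side
    have hfx : tmap src tgt φ ψ Es q i x ∈ push ψ (edg src tgt φ Es i x) n ''
        (ψ (edg src tgt φ Es i x n) '' Fs (tgt (edg src tgt φ Es i x n))) := by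
      have h1 := tmap_mem_push hA hB hq hx (n + 1)
      rw [itin_succ_fst] at h1
      exact (Set.image_comp (push ψ (edg src tgt φ Es i x) n)
        (ψ (edg src tgt φ Es i x n)) _) ▸ h1
    have hfy : tmap src tgt φ ψ Es q i y ∈ push ψ (edg src tgt φ Es i x) n ''
        (ψ (edg src tgt φ Es i y n) '' Fs (tgt (edg src tgt φ Es i y n))) := by
      have h1 := tmap_mem_push hA hB hq hy (n + 1)
      rw [itin_succ_fst] at h1
      rw [← hpushB]
      exact (Set.image_comp (push ψ (edg src tgt φ Es i y) n)
        (ψ (edg src tgt φ Es i y n)) _) ▸ h1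
    obtain ⟨a, ha, hax⟩ := hfx
    obtain ⟨b, hb, hby⟩ := hfy
    have hdf : dist (tmap src tgt φ ψ Es q i x) (tmap src tgt φ ψ Es q i y)
        = P * dist a b := by
      rw [← hax, ← hby]
      exact push_sim hB.2.2.1 _ n _ _
    have hgapB : gB ≤ dist a b := hgB' _ _ hn hsrc_eq _ ha _ hb
    have ha' : a ∈ Fs ((itin src tgt φ Es i x n).1) :=
      piece_subset hB (edg_src hA hx n) ha
    have hb' : b ∈ Fs ((itin src tgt φ Es i x n).1) := by
      rw [hvtx]
      exact piece_subset hB (edg_src hA hy n) hb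
    have hdiamB : dist a b ≤ DB :=
      le_trans (Metric.dist_le_diam_of_mem (hB.2.2.2.1 _).2.isBounded ha' hb') (hDBle _)
    constructor
    · rw [inv_mul_le_iff₀ hC0]
      nlinarith [mul_le_mul_of_nonneg_left hdiamA hP.le,
        mul_le_mul_of_nonneg_left hC3 hP.le,
        mul_le_mul_of_nonneg_left hgapB (mul_nonneg hC0.le hP.le)]
    · nlinarith [mul_le_mul_of_nonneg_left hdiamB hP.le,
        mul_le_mul_of_nonneg_left hC2 hP.le,
        mul_le_mul_of_nonneg_left hgapA (mul_nonneg hC0.le hP.le)]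
end Main


section Surj
variable {X : Type*} [MetricSpace X] [CompleteSpace X] [Nonempty X]
variable {ℓ : ℕ} {Γ : Type} [Fintype Γ] [Nonempty Γ]
variable {src tgt : Γ → Fin ℓ} {r : Γ → ℝ} {φ ψ : Γ → X → X} {Es Fs : Fin ℓ → Set X}
variable {q p : Fin ℓ → X}

theorem tmap_tmap (hA : IsDustLikeGDS Γ src tgt r φ Es)
    (hB : IsDustLikeGDS Γ src tgt r ψ Fs)
    (hq : ∀ j, q j ∈ Fs j) (hp : ∀ j, p j ∈ Es j) {i : Fin ℓ} {y : X} (hy : y ∈ Fs i) :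
    tmap src tgt φ ψ Es q i (tmap src tgt ψ φ Fs p i y) = y := by
  set x := tmap src tgt ψ φ Fs p i y with hx_def
  have hx : x ∈ Es i := tmap_mem hB hA hp hy
  have hcode := code_eq hB hA hp hy
  obtain ⟨D, hD0, hDle⟩ := exists_diam_bound hB
  obtain ⟨ρ, hρ0, hρ1, hρle⟩ := exists_rho hB.2.1
  have key : ∀ n, dist (tmap src tgt φ ψ Es q i x) y ≤ D * ρ ^ n := by
    intro n
    have hfx := tmap_mem_push hA hB hq hx n
    rw [show push ψ (edg src tgt φ Es i x) n = push ψ (edg src tgt ψ Fs i y) n from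
      push_congr fun k _ => (hcode k).2, (hcode n).1] at hfx
    obtain ⟨a, ha, hax⟩ := hfx
    have hyp : push ψ (edg src tgt ψ Fs i y) n ((itin src tgt ψ Fs i y n).2) = y :=
      itin_push hB hy n
    have hd := push_sim hB.2.2.1 (edg src tgt ψ Fs i y) n a ((itin src tgt ψ Fs i y n).2)
    rw [hax, hyp] at hd
    have hdd : dist a ((itin src tgt ψ Fs i y n).2) ≤ D :=
      le_trans (Metric.dist_le_diam_of_mem (hB.2.2.2.1 _).2.isBounded ha
        (itin_mem hB hy n)) (hDle _)
    have h3 := prodR_le_pow (fun e => (hB.2.1 e).1) hρle (edg src tgt ψ Fs i y) n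
    have h4 := (prodR_pos (fun e => (hB.2.1 e).1) (edg src tgt ψ Fs i y) n).le
    calc dist (tmap src tgt φ ψ Es q i x) y = _ := hd
      _ ≤ ρ ^ n * D := mul_le_mul h3 hdd dist_nonneg (pow_nonneg hρ0 n)
      _ = D * ρ ^ n := mul_comm _ _
  have hlim : Filter.Tendsto (fun n : ℕ => D * ρ ^ n) Filter.atTop (nhds 0) := by
    have := (tendsto_pow_atTop_nhds_zero_of_lt_one hρ0 hρ1).const_mul D
    simpa using this
  have : dist (tmap src tgt φ ψ Es q i x) y ≤ 0 := ge_of_tendsto' hlim key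
  exact dist_le_zero.1 this

theorem master (hA : IsDustLikeGDS Γ src tgt r φ Es)
    (hB : IsDustLikeGDS Γ src tgt r ψ Fs) (i : Fin ℓ) :
    LipschitzEquivalent (Es i) (Fs i) := by
  have hq : ∀ j, (fun j => (hB.2.2.2.1 j).1.choose) j ∈ Fs j :=
    fun j => (hB.2.2.2.1 j).1.choose_spec
  have hp : ∀ j, (fun j => (hA.2.2.2.1 j).1.choose) j ∈ Es j :=
    fun j => (hA.2.2.2.1 j).1.choose_spec
  set q : Fin ℓ → X := fun j => (hB.2.2.2.1 j).1.choose
  set p : Fin ℓ → X := fun j => (hA.2.2.2.1 j).1.choose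
  obtain ⟨C, hC0, hbounds⟩ := lipschitz_bounds hA hB hq
  refine ⟨tmap src tgt φ ψ Es q i, C, hC0, ⟨fun x hx => tmap_mem hA hB hq hx, ?_, ?_⟩,
    fun x hx y hy => hbounds i x hx y hy⟩
  · intro x hx y hy hfeq
    have h1 := (hbounds i x hx y hy).1
    rw [hfeq, dist_self] at h1
    have h2 : dist x y ≤ 0 := by
      have := inv_pos.2 hC0
      nlinarith
    exact dist_le_zero.1 h2
  · intro y hy
    exact ⟨tmap src tgt ψ φ Fs p i y, tmap_mem hB hA hp hy, tmap_tmap hA hB hq hp hy⟩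

end Surj

end GDS

theorem gds_same_structure_lipschitz_equivalent
    (d ℓ : ℕ) (Γ : Type) [Fintype Γ]
    (src tgt : Γ → Fin ℓ) (r : Γ → ℝ)
    (φ ψ : Γ → EuclideanSpace ℝ (Fin d) → EuclideanSpace ℝ (Fin d))
    (Es Fs : Fin ℓ → Set (EuclideanSpace ℝ (Fin d)))
    (hE : IsDustLikeGDS Γ src tgt r φ Es)
    (hF : IsDustLikeGDS Γ src tgt r ψ Fs) :
    ∀ i, LipschitzEquivalent (Es i) (Fs i) := by
  intro i
  haveI : Nonempty Γ := ⟨(hE.1 i).choose⟩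
  exact GDS.master hE hF i
end
end

section
/- Let M ⊆ ℝ be the attractor of the iterated function system {x ↦ x/5, x ↦ x/5 + 2/5, x ↦ x/5 + 4/5} (the {1,3,5}-set) and let M' ⊆ ℝ be the attractor of the iterated function system {x ↦ x/5, x ↦ x/5 + 3/5, x ↦ x/5 + 4/5} (the {1,4,5}-set). Then M and M' are Lipschitz equivalent. -/
open Set Metric MeasureTheory

noncomputable section

/-!
Both sets are coded by sequences `e : ℕ → Fin 3`. A code of a point of `M` is its sequence of
base-5 digits `2 e k`. For `M'`, the sets `N = M' ∪ (M' + 1)` and `P = N ∪ (M' + 2)` satisfy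
`5 M' = M' ∪ (N + 3)`, `5 N = M' ∪ (P + 3) ∪ (N + 8)` and
`5 P = M' ∪ (P + 3) ∪ (P + 8) ∪ (N + 13)`. Splitting `N` into two and `P` into three of these
pieces gives six sets, each the union of exactly three of them scaled by `1/5` and translated:
a graph-directed system with three maps per set, whose codes are read off by a six-state
transducer emitting base-5 digits.

In both codings, sequences with different first digits go to points at distance at least some
`δ > 0` (a finite check on the transducer tables, using `M' ⊆ [0,1]`, `N ⊆ [0,2]`,
`P ⊆ [0,3]`), so sequences that first differ at position `n` go to points at distance
comparable to `5⁻ⁿ`. Hence matching codes is a bi-Lipschitz bijection `M → M'`.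
-/

open Filter Topology

lemma tendsto_div_five_pow_of_abs_le {f : ℕ → ℝ} {R : ℝ} (hf : ∀ n, |f n| ≤ R) :
    Tendsto (fun n => f n / 5 ^ n) atTop (𝓝 0) := by
  refine squeeze_zero_norm (fun n => ?_) ((tendsto_const_nhds (x := R)).div_atTop
    (tendsto_pow_atTop_atTop_of_one_lt (r := (5 : ℝ)) (by norm_num)))
  rw [norm_div, Real.norm_eq_abs, Real.norm_eq_abs, abs_of_pos (by positivity : (0 : ℝ) < 5 ^ n)]
  gcongr
  exact hf n

lemma exists_forall_abs_le_of_isCompact {ι : Type*} [Finite ι] {L : ι → Set ℝ}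
    (hc : ∀ i, IsCompact (L i)) : ∃ R, ∀ i, ∀ x ∈ L i, |x| ≤ R := by
  obtain ⟨R, hR⟩ := isBounded_iff_forall_norm_le.mp (isCompact_iUnion hc).isBounded
  exact ⟨R, fun i x hx => hR x (mem_iUnion.mpr ⟨i, hx⟩)⟩

lemma iUnion_fin_three {α : Type*} (f : Fin 3 → Set α) : ⋃ i, f i = f 0 ∪ f 1 ∪ f 2 :=
  iSup_fin_three

theorem lipschitzEquivalent_range_of_dist_le {X Z : Type*} [MetricSpace X] {π₁ π₂ : Z → X}
    {K : ℝ} (h₁ : ∀ z z', dist (π₂ z) (π₂ z') ≤ K * dist (π₁ z) (π₁ z'))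
    (h₂ : ∀ z z', dist (π₁ z) (π₁ z') ≤ K * dist (π₂ z) (π₂ z')) :
    LipschitzEquivalent (range π₁) (range π₂) := by
  have hfac : Function.FactorsThrough π₂ π₁ := fun z z' h =>
    dist_le_zero.mp (by simpa [h] using h₁ z z')
  have hf := hfac.extend_apply id
  refine ⟨Function.extend π₁ π₂ id, max K 1, by positivity, ⟨?_, ?_, ?_⟩, ?_⟩
  · rintro _ ⟨z, rfl⟩
    exact ⟨z, (hf z).symm⟩
  · rintro _ ⟨z, rfl⟩ _ ⟨z', rfl⟩ h
    rw [hf, hf] at h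
    exact dist_le_zero.mp (by simpa [h] using h₂ z z')
  · rintro _ ⟨z, rfl⟩
    exact ⟨π₁ z, mem_range_self z, hf z⟩
  · rintro _ ⟨z, rfl⟩ _ ⟨z', rfl⟩
    rw [hf, hf]
    constructor
    · rw [inv_mul_le_iff₀ (by positivity)]
      exact (h₂ z z').trans (by gcongr; exact le_max_left _ _)
    · exact (h₁ z z').trans (by gcongr; exact le_max_left _ _)

def fifthImage (c : ℝ) (X : Set ℝ) : Set ℝ := (fun x => (x + c) / 5) '' X

lemma fifthImage_union (c : ℝ) (X Y : Set ℝ) :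
    fifthImage c (X ∪ Y) = fifthImage c X ∪ fifthImage c Y :=
  image_union _ X Y

lemma fifthImage_image_add (c t : ℝ) (X : Set ℝ) :
    fifthImage c ((· + t) '' X) = fifthImage (c + t) X := by
  simp only [fifthImage, image_image, add_assoc, add_comm t]

lemma image_add_fifthImage (c t : ℝ) (X : Set ℝ) :
    (· + t) '' fifthImage c X = fifthImage (c + 5 * t) X := by
  simp only [fifthImage, image_image]
  congr with x
  ring

lemma IsCompact.fifthImage {X : Set ℝ} (hX : IsCompact X) (c : ℝ) :
    IsCompact (fifthImage c X) :=
  hX.image (by fun_prop)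

structure DigitTransducer (σ α : Type*) where
  next : σ → α → σ
  out : σ → α → ℕ

namespace DigitTransducer

variable {σ α : Type*} (T : DigitTransducer σ α)

def run (s : σ) (e : ℕ → α) : ℕ → σ
  | 0 => s
  | n + 1 => T.next (run s e n) (e n)

def digit (s : σ) (e : ℕ → α) (n : ℕ) : ℕ := T.out (T.run s e n) (e n)

def partialValue (s : σ) (e : ℕ → α) (n : ℕ) : ℝ :=
  ∑ k ∈ Finset.range n, (T.digit s e k : ℝ) / 5 ^ (k + 1)

def value (s : σ) (e : ℕ → α) : ℝ := ∑' k, (T.digit s e k : ℝ) / 5 ^ (k + 1)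

def IsPotential (w : σ → ℕ) : Prop := ∀ s a, T.out s a + w (T.next s a) ≤ 5 * w s

def IsSeparated (δ : ℝ) : Prop :=
  ∀ s e e', e 0 ≠ e' 0 → δ ≤ |T.value s e - T.value s e'|

-- An `abbrev`, so that `decide` can evaluate it on finite tables.
abbrev LeftOf (w : σ → ℕ) (d : ℕ) (s : σ) (a : α) (t : σ) (b : α) : Prop :=
  T.out s a + d + w (T.next s a) ≤ T.out t b

def IsAttractor (L : σ → Set ℝ) : Prop :=
  ∀ s, L s = ⋃ a, fifthImage (T.out s a) (L (T.next s a))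

variable {T} {s : σ} {e e' : ℕ → α} {n : ℕ}

lemma run_add (s : σ) (e : ℕ → α) (m n : ℕ) :
    T.run s e (n + m) = T.run (T.run s e m) (fun k => e (k + m)) n := by
  induction n with
  | zero => simp [run]
  | succ n ih => rw [Nat.add_right_comm, run, run, ih]

lemma run_congr (h : ∀ k < n, e k = e' k) : T.run s e n = T.run s e' n := by
  induction n with
  | zero => rfl
  | succ n ih => rw [run, run, ih fun k hk => h k (by omega), h n n.lt_succ_self]

lemma partialValue_congr (h : ∀ k < n, e k = e' k) :
    T.partialValue s e n = T.partialValue s e' n := by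
  refine Finset.sum_congr rfl fun k hk => ?_
  have hk : k < n := Finset.mem_range.mp hk
  rw [digit, digit, run_congr fun j hj => h j (by omega), h k hk]

lemma partialValue_succ (s : σ) (e : ℕ → α) (n : ℕ) :
    T.partialValue s e (n + 1) =
      T.partialValue s e n + T.out (T.run s e n) (e n) / 5 ^ (n + 1) :=
  Finset.sum_range_succ _ n

lemma value_nonneg (s : σ) (e : ℕ → α) : 0 ≤ T.value s e :=
  tsum_nonneg fun _ => by positivity

lemma IsPotential.partialValue_add_le {w : σ → ℕ} (hw : T.IsPotential w) (s : σ) (e : ℕ → α) :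
    ∀ n, T.partialValue s e n + w (T.run s e n) / 5 ^ n ≤ w s
  | 0 => by simp [partialValue, run]
  | n + 1 => by
    have hstep : (T.out (T.run s e n) (e n) + w (T.run s e (n + 1)) : ℝ)
        ≤ 5 * w (T.run s e n) := by
      exact_mod_cast hw (T.run s e n) (e n)
    calc T.partialValue s e (n + 1) + w (T.run s e (n + 1)) / 5 ^ (n + 1)
        = T.partialValue s e n
            + (T.out (T.run s e n) (e n) + w (T.run s e (n + 1)) : ℝ) / 5 ^ (n + 1) := by
          rw [partialValue_succ]; ring
      _ ≤ T.partialValue s e n + 5 * w (T.run s e n) / 5 ^ (n + 1) := by gcongr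
      _ = T.partialValue s e n + w (T.run s e n) / 5 ^ n := by rw [pow_succ]; field_simp
      _ ≤ w s := hw.partialValue_add_le s e n

section Attractor

variable {L : σ → Set ℝ}

lemma IsAttractor.mem_of_mem_next (hL : T.IsAttractor L) {a : α} {x : ℝ}
    (hx : x ∈ L (T.next s a)) : (x + T.out s a) / 5 ∈ L s := by
  rw [hL s]
  exact mem_iUnion.mpr ⟨a, x, hx, rfl⟩

lemma IsAttractor.exists_mem_next (hL : T.IsAttractor L) {z : ℝ} (hz : z ∈ L s) :
    ∃ a, 5 * z - T.out s a ∈ L (T.next s a) := by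
  rw [hL s] at hz
  obtain ⟨a, x, hx, rfl⟩ := mem_iUnion.mp hz
  exact ⟨a, by convert hx using 1; ring⟩

lemma IsAttractor.partialValue_add_mem (hL : T.IsAttractor L) (s : σ) (e : ℕ → α) :
    ∀ n, ∀ x ∈ L (T.run s e n), T.partialValue s e n + x / 5 ^ n ∈ L s
  | 0, x, hx => by simpa [partialValue, run] using hx
  | n + 1, x, hx => by
    convert hL.partialValue_add_mem s e n _ (hL.mem_of_mem_next hx) using 1
    rw [partialValue_succ, pow_succ]
    field_simp
    ring

end Attractor

section Finite

variable [Finite σ] [Finite α]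

lemma summable_digit (T : DigitTransducer σ α) (s : σ) (e : ℕ → α) :
    Summable fun k => (T.digit s e k : ℝ) / 5 ^ (k + 1) := by
  obtain ⟨B, hB⟩ := Finite.bddAbove_range fun p : σ × α => T.out p.1 p.2
  refine Summable.of_nonneg_of_le (fun k => by positivity) (fun k => ?_)
    ((summable_geometric_of_lt_one (by norm_num : (0 : ℝ) ≤ 1 / 5) (by norm_num)).mul_left
      ((B : ℝ) / 5))
  have hk : (T.digit s e k : ℝ) ≤ B := by exact_mod_cast hB ⟨(_, e k), rfl⟩
  calc (T.digit s e k : ℝ) / 5 ^ (k + 1) ≤ B / 5 ^ (k + 1) := by gcongr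
    _ = B / 5 * (1 / 5) ^ k := by rw [one_div_pow, pow_succ]; field_simp

lemma tendsto_partialValue (s : σ) (e : ℕ → α) :
    Tendsto (T.partialValue s e) atTop (𝓝 (T.value s e)) :=
  (T.summable_digit s e).hasSum.tendsto_sum_nat

lemma value_eq_partialValue_add (s : σ) (e : ℕ → α) (n : ℕ) :
    T.value s e = T.partialValue s e n + T.value (T.run s e n) (fun k => e (k + n)) / 5 ^ n := by
  rw [value, ← (T.summable_digit s e).sum_add_tsum_nat_add n, partialValue, value,
    ← tsum_div_const]
  congr 2 with k
  rw [digit, digit, run_add, pow_add, pow_add, pow_add]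
  field_simp

lemma value_eq (s : σ) (e : ℕ → α) :
    T.value s e = (T.out s (e 0) + T.value (T.next s (e 0)) (fun k => e (k + 1))) / 5 := by
  rw [T.value_eq_partialValue_add s e 1]
  simp only [partialValue, Finset.sum_range_one, digit, run, zero_add, pow_one]
  ring

lemma IsPotential.value_le {w : σ → ℕ} (hw : T.IsPotential w) (s : σ) (e : ℕ → α) :
    T.value s e ≤ w s :=
  (T.summable_digit s e).tsum_le_of_sum_range_le fun n =>
    le_trans (le_add_of_nonneg_right (by positivity)) (hw.partialValue_add_le s e n)

lemma value_sub_value (h : ∀ k < n, e k = e' k) :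
    T.value s e - T.value s e' =
      (T.value (T.run s e n) (fun k => e (k + n)) - T.value (T.run s e n) (fun k => e' (k + n)))
        / 5 ^ n := by
  rw [T.value_eq_partialValue_add s e n, T.value_eq_partialValue_add s e' n,
    partialValue_congr h, run_congr h]
  ring

lemma IsPotential.abs_value_sub_le {w : σ → ℕ} (hw : T.IsPotential w)
    (h : ∀ k < n, e k = e' k) : |T.value s e - T.value s e'| ≤ w (T.run s e n) / 5 ^ n := by
  rw [value_sub_value h, abs_div, abs_of_pos (by positivity : (0 : ℝ) < 5 ^ n)]
  gcongr
  exact abs_sub_le_of_nonneg_of_le (T.value_nonneg _ _) (hw.value_le _ _)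
    (T.value_nonneg _ _) (hw.value_le _ _)

lemma IsSeparated.le_abs_value_sub {δ : ℝ} (hδ : T.IsSeparated δ)
    (h : ∀ k < n, e k = e' k) (hn : e n ≠ e' n) : δ / 5 ^ n ≤ |T.value s e - T.value s e'| := by
  rw [value_sub_value h, abs_div, abs_of_pos (by positivity : (0 : ℝ) < 5 ^ n)]
  gcongr
  exact hδ _ _ _ (by simpa using hn)

lemma IsPotential.value_add_le {w : σ → ℕ} (hw : T.IsPotential w) {d : ℕ} {t : σ}
    (h : T.LeftOf w d s (e 0) t (e' 0)) : T.value s e + d / 5 ≤ T.value t e' := by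
  have hle := hw.value_le (T.next s (e 0)) fun k => e (k + 1)
  have hnn := T.value_nonneg (T.next t (e' 0)) fun k => e' (k + 1)
  have h' : (T.out s (e 0) + d + w (T.next s (e 0)) : ℝ) ≤ T.out t (e' 0) := by exact_mod_cast h
  rw [T.value_eq s e, T.value_eq t e']
  linarith

lemma IsPotential.le_abs_value_sub {w : σ → ℕ} (hw : T.IsPotential w) {d : ℕ} {t : σ}
    (h : T.LeftOf w d s (e 0) t (e' 0) ∨ T.LeftOf w d t (e' 0) s (e 0)) :
    d / 5 ≤ |T.value s e - T.value t e'| := by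
  rcases h with h | h
  · rw [abs_sub_comm]; exact le_abs.mpr (Or.inl (by linarith [hw.value_add_le h]))
  · exact le_abs.mpr (Or.inl (by linarith [hw.value_add_le h]))

lemma IsPotential.isSeparated {w : σ → ℕ} (hw : T.IsPotential w) {d : ℕ}
    (h : ∀ s a a', a ≠ a' → T.LeftOf w d s a s a' ∨ T.LeftOf w d s a' s a ∨
      (T.out s a = T.out s a' ∧ ∀ b b', T.LeftOf w d (T.next s a) b (T.next s a') b' ∨
        T.LeftOf w d (T.next s a') b' (T.next s a) b)) :
    T.IsSeparated (d / 25) := by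
  intro s e e' he
  have hd : (0 : ℝ) ≤ d := d.cast_nonneg
  rcases h s (e 0) (e' 0) he with h | h | ⟨hout, h⟩
  · linarith [hw.le_abs_value_sub (Or.inl h)]
  · linarith [hw.le_abs_value_sub (e := e) (e' := e') (Or.inr h)]
  · have := hw.le_abs_value_sub (e := fun k => e (k + 1)) (e' := fun k => e' (k + 1))
      (h (e 1) (e' 1))
    rw [T.value_eq s e, T.value_eq s e', hout, ← sub_div, add_sub_add_left_eq_sub, abs_div,
      abs_of_pos (by norm_num : (0 : ℝ) < 5)]
    linarith

section Attractor

variable {L : σ → Set ℝ}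

lemma IsAttractor.value_mem (hL : T.IsAttractor L) (hc : ∀ s, IsCompact (L s))
    (hne : ∀ s, (L s).Nonempty) (s : σ) (e : ℕ → α) : T.value s e ∈ L s := by
  choose u hu using hne
  obtain ⟨R, hR⟩ := exists_forall_abs_le_of_isCompact hc
  have hlim : Tendsto (fun n => T.partialValue s e n + u (T.run s e n) / 5 ^ n) atTop
      (𝓝 (T.value s e)) := by
    simpa using (T.tendsto_partialValue s e).add
      (tendsto_div_five_pow_of_abs_le fun n => hR _ _ (hu (T.run s e n)))
  exact (hc s).isClosed.mem_of_tendsto hlim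
    (Eventually.of_forall fun n => hL.partialValue_add_mem s e n _ (hu _))

lemma IsAttractor.exists_value_eq (hL : T.IsAttractor L) (hc : ∀ s, IsCompact (L s))
    {z : ℝ} (hz : z ∈ L s) : ∃ e, T.value s e = z := by
  obtain ⟨R, hR⟩ := exists_forall_abs_le_of_isCompact hc
  choose g hg using fun p : {p : σ × ℝ // p.2 ∈ L p.1} => hL.exists_mem_next p.2
  let step : {p : σ × ℝ // p.2 ∈ L p.1} → {p : σ × ℝ // p.2 ∈ L p.1} := fun p =>
    ⟨(T.next p.1.1 (g p), 5 * p.1.2 - T.out p.1.1 (g p)), hg p⟩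
  let p : ℕ → {p : σ × ℝ // p.2 ∈ L p.1} := fun n => step^[n] ⟨(s, z), hz⟩
  have hp : ∀ n, p (n + 1) = step (p n) := fun n => Function.iterate_succ_apply' _ _ _
  let e : ℕ → α := fun n => g (p n)
  have hrun : ∀ n, (p n).1.1 = T.run s e n := by
    intro n
    induction n with
    | zero => rfl
    | succ n ih => rw [hp, run, ← ih]
  have hz_eq : ∀ n, z = T.partialValue s e n + (p n).1.2 / 5 ^ n := by
    intro n
    induction n with
    | zero => simp [p, partialValue]
    | succ n ih =>
      rw [ih, partialValue_succ, hp, ← hrun]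
      simp only [step, pow_succ]
      field_simp
      ring
  refine ⟨e, tendsto_nhds_unique (T.tendsto_partialValue s e) ?_⟩
  have hlim := (tendsto_const_nhds (x := z)).sub
    (tendsto_div_five_pow_of_abs_le fun n => hR _ _ (p n).2)
  rw [sub_zero] at hlim
  exact hlim.congr fun n => by rw [hz_eq n]; ring

theorem IsAttractor.range_value (hL : T.IsAttractor L) (hc : ∀ s, IsCompact (L s))
    (hne : ∀ s, (L s).Nonempty) (s : σ) : range (T.value s) = L s :=
  Subset.antisymm (range_subset_iff.mpr (hL.value_mem hc hne s))
    fun _ hz => hL.exists_value_eq hc hz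

end Attractor

end Finite

section TwoTransducers

variable {σ₁ σ₂ α : Type*} [Finite σ₁] [Finite σ₂] [Finite α]
  {T₁ : DigitTransducer σ₁ α} {T₂ : DigitTransducer σ₂ α}

lemma dist_value_le_mul_dist_value {w₂ : σ₂ → ℕ} {W₂ : ℕ} (hw₂ : T₂.IsPotential w₂)
    (hW₂ : ∀ s, w₂ s ≤ W₂) {δ₁ : ℝ} (hδ₁ : 0 < δ₁) (hsep₁ : T₁.IsSeparated δ₁)
    (s₁ : σ₁) (s₂ : σ₂) (e e' : ℕ → α) :
    dist (T₂.value s₂ e) (T₂.value s₂ e') ≤ W₂ / δ₁ * dist (T₁.value s₁ e) (T₁.value s₁ e') := by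
  rcases eq_or_ne e e' with rfl | he
  · simp
  set n := PiNat.firstDiff e e'
  have hagree : ∀ k < n, e k = e' k := fun k hk => PiNat.apply_eq_of_lt_firstDiff hk
  have hW : (w₂ (T₂.run s₂ e n) : ℝ) ≤ W₂ := by exact_mod_cast hW₂ _
  rw [Real.dist_eq, Real.dist_eq]
  calc |T₂.value s₂ e - T₂.value s₂ e'| ≤ W₂ / 5 ^ n :=
        (hw₂.abs_value_sub_le hagree).trans (by gcongr)
    _ = W₂ / δ₁ * (δ₁ / 5 ^ n) := by field_simp
    _ ≤ W₂ / δ₁ * |T₁.value s₁ e - T₁.value s₁ e'| := by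
        gcongr
        exact hsep₁.le_abs_value_sub hagree (PiNat.apply_firstDiff_ne he)

theorem lipschitzEquivalent_range_value {w₁ : σ₁ → ℕ} {w₂ : σ₂ → ℕ}
    (hw₁ : T₁.IsPotential w₁) (hw₂ : T₂.IsPotential w₂) {δ₁ δ₂ : ℝ} (hδ₁ : 0 < δ₁)
    (hδ₂ : 0 < δ₂) (hsep₁ : T₁.IsSeparated δ₁) (hsep₂ : T₂.IsSeparated δ₂) (s₁ : σ₁) (s₂ : σ₂) :
    LipschitzEquivalent (range (T₁.value s₁)) (range (T₂.value s₂)) := by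
  obtain ⟨W₁, hW₁⟩ := Finite.bddAbove_range w₁
  obtain ⟨W₂, hW₂⟩ := Finite.bddAbove_range w₂
  refine lipschitzEquivalent_range_of_dist_le (K := max (W₂ / δ₁) (W₁ / δ₂))
    (fun e e' => ?_) (fun e e' => ?_)
  · exact (dist_value_le_mul_dist_value hw₂ (fun s => hW₂ ⟨s, rfl⟩) hδ₁ hsep₁ s₁ s₂ e e').trans
      (by gcongr; exact le_max_left _ _)
  · exact (dist_value_le_mul_dist_value hw₁ (fun s => hW₁ ⟨s, rfl⟩) hδ₂ hsep₂ s₂ s₁ e e').trans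
      (by gcongr; exact le_max_right _ _)

end TwoTransducers

end DigitTransducer

namespace Set135

def transducer : DigitTransducer Unit (Fin 3) where
  next _ _ := ()
  out _ a := 2 * a

lemma isPotential : transducer.IsPotential 1 := by
  unfold DigitTransducer.IsPotential; decide

lemma isSeparated : transducer.IsSeparated (1 / 25) := by
  simpa using isPotential.isSeparated (d := 1) (by decide)

lemma isAttractor {M : Set ℝ} (hM : M = fifthImage 0 M ∪ fifthImage 2 M ∪ fifthImage 4 M) :
    transducer.IsAttractor fun _ => M := by
  intro
  simp only [iUnion_fin_three, transducer]
  norm_num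
  exact hM

end Set135

namespace Set145

inductive State | A | B₀ | B₁ | C₀ | C₁ | C₂
  deriving DecidableEq

open State

instance : Fintype State :=
  Fintype.ofList [A, B₀, B₁, C₀, C₁, C₂] (by intro s; cases s <;> simp)

def transducer : DigitTransducer State (Fin 3) where
  next
    | A, 0 | B₁, 0 | C₂, 0 => A
    | A, 1 | B₁, 1 | C₂, 1 => B₀
    | A, _ | B₁, _ | C₂, _ => B₁
    | _, 0 => C₀
    | _, 1 => C₁
    | _, _ => C₂
  out
    | A, 0 | B₁, 0 | C₂, 0 => 0
    | A, _ | B₀, _ | C₀, _ => 3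
    | B₁, _ | C₁, _ => 8
    | C₂, _ => 13

def width : State → ℕ
  | A => 1
  | B₀ | B₁ => 2
  | C₀ | C₁ | C₂ => 3

lemma isPotential : transducer.IsPotential width := by
  unfold DigitTransducer.IsPotential; decide

lemma isSeparated : transducer.IsSeparated (2 / 25) := by
  simpa using isPotential.isSeparated (d := 2) (by decide)

def N (K : Set ℝ) : Set ℝ := K ∪ (· + 1) '' K

def P (K : Set ℝ) : Set ℝ := N K ∪ (· + 2) '' K

def piece (K : Set ℝ) : State → Set ℝ
  | A => K
  | B₀ | C₀ => fifthImage 3 (P K)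
  | B₁ => fifthImage 0 K ∪ fifthImage 8 (N K)
  | C₁ => fifthImage 8 (P K)
  | C₂ => fifthImage 0 K ∪ fifthImage 13 (N K)

section SetEquations

variable {K : Set ℝ} (hK : K = fifthImage 0 K ∪ fifthImage 3 K ∪ fifthImage 4 K)
include hK

lemma eq_union_fifthImage_N : K = fifthImage 0 K ∪ fifthImage 3 (N K) := by
  rw [N, fifthImage_union, fifthImage_image_add, ← union_assoc]
  norm_num
  exact hK

lemma N_eq_union_pieces : N K = piece K B₀ ∪ piece K B₁ := by
  conv_lhs => rw [N, hK]
  simp only [piece, N, P, image_union, fifthImage_union, fifthImage_image_add,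
    image_add_fifthImage]
  norm_num
  ext x
  simp only [mem_union]
  tauto

lemma P_eq_union_pieces : P K = piece K C₀ ∪ piece K C₁ ∪ piece K C₂ := by
  conv_lhs => rw [P, N, hK]
  simp only [piece, N, P, image_union, fifthImage_union, fifthImage_image_add,
    image_add_fifthImage]
  norm_num
  ext x
  simp only [mem_union]
  tauto

lemma isAttractor : transducer.IsAttractor (piece K) := by
  intro s
  cases s <;> simp only [iUnion_fin_three, transducer, Nat.cast_zero, Nat.cast_ofNat]
  case A | B₁ | C₂ =>
    rw [union_assoc, ← fifthImage_union, ← N_eq_union_pieces hK]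
    first | exact eq_union_fifthImage_N hK | rfl
  all_goals rw [← fifthImage_union, ← fifthImage_union, ← P_eq_union_pieces hK]; rfl

end SetEquations

lemma isCompact_piece {K : Set ℝ} (hK : IsCompact K) (s : State) : IsCompact (piece K s) := by
  have hN : IsCompact (N K) := hK.union (hK.image (continuous_add_const 1))
  have hP : IsCompact (P K) := hN.union (hK.image (continuous_add_const 2))
  cases s
  case A => exact hK
  case B₁ | C₂ => exact (hK.fifthImage _).union (hN.fifthImage _)
  all_goals exact hP.fifthImage _

lemma piece_nonempty {K : Set ℝ} (hK : K.Nonempty) (s : State) : (piece K s).Nonempty := by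
  have hP : (P K).Nonempty := hK.inl.inl
  cases s
  case A => exact hK
  case B₁ | C₂ => exact (hK.image _).inl
  all_goals exact hP.image _

end Set145

theorem set135_lipschitz_equivalent_set145
    (M M' : Set ℝ)
    (hMne : M.Nonempty) (hMcomp : IsCompact M)
    (hMdef : M = (fun x => x / 5) '' M ∪ (fun x => x / 5 + 2 / 5) '' M ∪
      (fun x => x / 5 + 4 / 5) '' M)
    (hM'ne : M'.Nonempty) (hM'comp : IsCompact M')
    (hM'def : M' = (fun x => x / 5) '' M' ∪ (fun x => x / 5 + 3 / 5) '' M' ∪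
      (fun x => x / 5 + 4 / 5) '' M') :
    LipschitzEquivalent M M' := by
  have hMself : M = fifthImage 0 M ∪ fifthImage 2 M ∪ fifthImage 4 M := by
    simpa only [fifthImage, add_div, add_zero] using hMdef
  have hM'self : M' = fifthImage 0 M' ∪ fifthImage 3 M' ∪ fifthImage 4 M' := by
    simpa only [fifthImage, add_div, add_zero] using hM'def
  have hM : range (Set135.transducer.value ()) = M :=
    (Set135.isAttractor hMself).range_value (fun _ => hMcomp) (fun _ => hMne) ()
  have hM' : range (Set145.transducer.value .A) = M' :=
    (Set145.isAttractor hM'self).range_value (Set145.isCompact_piece hM'comp)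
      (Set145.piece_nonempty hM'ne) .A
  rw [← hM, ← hM']
  exact DigitTransducer.lipschitzEquivalent_range_value Set135.isPotential Set145.isPotential
    (by norm_num) (by norm_num) Set135.isSeparated Set145.isSeparated () .A
end
end
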